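/- arXiv:1206.1993 — 6 statements merged into one kernel-verified Lean document; each statement's English description precedes it below -/
import Mathlib

section
/- If a finite simple graph G has n vertices, no isolated vertices, and no two distinct adjacent vertices with the same closed neighborhood, then the minimum number of cliques needed to cover all edges of G is at least log₂(n+1). -/
open SimpleGraph

/-- A family of cliques covering every edge of `G`. -/
def IsEdgeCliqueCover {V : Type*} (G : SimpleGraph V) (F : Finset (Finset V)) : Prop :=
  (∀ C ∈ F, G.IsClique (C : Set V)) ∧
    ∀ e ∈ G.edgeSet, ∃ C ∈ F, ∀ x ∈ e, x ∈ C

/-- The edge-clique covering number `θ_e(G)`. -/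
noncomputable def thetaE {V : Type*} (G : SimpleGraph V) : ℕ :=
  sInf {n | ∃ F : Finset (Finset V), IsEdgeCliqueCover G F ∧ F.card = n}

lemma exists_cover {V : Type*} [Fintype V] (G : SimpleGraph V) :
    ∃ F : Finset (Finset V), IsEdgeCliqueCover G F ∧ F.card = thetaE G := by
  classical
  have hne : {n | ∃ F : Finset (Finset V), IsEdgeCliqueCover G F ∧ F.card = n}.Nonempty := by
    let pair : Sym2 V → Finset V := Sym2.lift ⟨fun a b => ({a, b} : Finset V),
      fun a b => Finset.pair_comm a b⟩
    have hpairmem : ∀ (e : Sym2 V) (x : V), x ∈ pair e ↔ x ∈ e := by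
      intro e x
      induction e with
      | h a b => simp [pair, Sym2.mem_iff]
    refine ⟨_, G.edgeFinset.image pair, ?_, rfl⟩
    constructor
    · intro C hC
      simp only [Finset.mem_image, mem_edgeFinset] at hC
      obtain ⟨e, he, rfl⟩ := hC
      induction e with
      | h a b =>
        rw [SimpleGraph.mem_edgeSet] at he
        intro x hx y hy hxy
        simp only [pair, Finset.coe_insert, Finset.coe_singleton, Set.mem_insert_iff,
          Set.mem_singleton_iff, Sym2.lift_mk, Finset.mem_insert, Finset.mem_singleton,
          Finset.mem_coe] at hx hy
        rcases hx with rfl | rfl <;> rcases hy with rfl | rfl <;>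
          first | exact absurd rfl hxy | exact he | exact he.symm
    · intro e he
      exact ⟨pair e, Finset.mem_image_of_mem _ (mem_edgeFinset.2 he),
        fun x hx => (hpairmem e x).2 hx⟩
  have := Nat.sInf_mem hne
  obtain ⟨F, hF, hcard⟩ := this
  exact ⟨F, hF, hcard⟩

/-- Gyárfás' lower bound: if `G` has no isolated vertices and no two distinct
adjacent vertices with equal closed neighborhoods, then `θ_e(G) ≥ log₂(n+1)`. -/
theorem thetaE_ge_logb {V : Type*} [Fintype V] (G : SimpleGraph V)
    (hiso : ∀ v : V, ∃ w : V, G.Adj v w)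
    (hequiv : ∀ x y : V, G.Adj x y →
      G.neighborSet x ∪ {x} ≠ G.neighborSet y ∪ {y}) :
    Real.logb 2 (Fintype.card V + 1) ≤ (thetaE G : ℝ) := by
  classical
  obtain ⟨F, ⟨hclique, hcover⟩, hcard⟩ := exists_cover G
  set k := thetaE G with hk
  set f : V → Finset (Finset V) := fun v => F.filter (fun C => v ∈ C) with hf
  -- each f v is nonempty
  have h1 : ∀ v, (f v).Nonempty := by
    intro v
    obtain ⟨w, hw⟩ := hiso v
    obtain ⟨C, hCF, hC⟩ := hcover s(v, w) ((G.mem_edgeSet).2 hw)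
    exact ⟨C, Finset.mem_filter.2 ⟨hCF, hC v (Sym2.mem_mk_left v w)⟩⟩
  -- f is injective
  have h2 : Function.Injective f := by
    intro x y hxy
    by_contra hne
    have hmem : ∀ C ∈ F, x ∈ C ↔ y ∈ C := by
      intro C hC
      constructor <;> intro h
      · have : C ∈ f y := hxy ▸ Finset.mem_filter.2 ⟨hC, h⟩
        exact (Finset.mem_filter.1 this).2
      · have : C ∈ f x := hxy ▸ Finset.mem_filter.2 ⟨hC, h⟩
        exact (Finset.mem_filter.1 this).2
    have hadj : G.Adj x y := by
      obtain ⟨C, hC⟩ := h1 x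
      rw [Finset.mem_filter] at hC
      exact hclique C hC.1 hC.2 ((hmem C hC.1).1 hC.2) hne
    have key : ∀ a b : V, G.Adj a b → (∀ C ∈ F, a ∈ C ↔ b ∈ C) →
        G.neighborSet a ∪ {a} ⊆ G.neighborSet b ∪ {b} := by
      intro a b hab hiff z hz
      rcases hz with hz | hz
      · -- z adjacent to a
        by_cases hzb : z = b
        · exact Or.inr hzb
        · obtain ⟨C, hCF, hC⟩ := hcover s(a, z) ((G.mem_edgeSet).2 hz)
          have ha : a ∈ C := hC a (Sym2.mem_mk_left a z)
          have hzC : z ∈ C := hC z (Sym2.mem_mk_right a z)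
          have hb : b ∈ C := (hiff C hCF).1 ha
          exact Or.inl ((G.mem_neighborSet b z).2 (hclique C hCF hb hzC (fun h => hzb h.symm)))
      · -- z = a
        rcases hz with rfl
        exact Or.inl ((G.mem_neighborSet b z).2 hab.symm)
    refine hequiv x y hadj (Set.Subset.antisymm (key x y hadj hmem)
      (key y x hadj.symm (fun C hC => (hmem C hC).symm)))
  -- counting
  have h3 : Fintype.card V + 1 ≤ 2 ^ k := by
    have hsub : ∀ v, f v ∈ F.powerset.erase ∅ := by
      intro v
      refine Finset.mem_erase.2 ⟨?_, Finset.mem_powerset.2 (Finset.filter_subset _ _)⟩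
      exact Finset.nonempty_iff_ne_empty.1 (h1 v)
    have := Finset.card_le_card_of_injOn (s := (Finset.univ : Finset V)) f
      (fun v _ => hsub v) (fun a _ b _ h => h2 h)
    rw [Finset.card_univ] at this
    have hpow : (F.powerset.erase ∅).card = 2 ^ k - 1 := by
      rw [Finset.card_erase_of_mem (Finset.empty_mem_powerset F),
        Finset.card_powerset, hcard]
    have hpos : 1 ≤ 2 ^ k := Nat.one_le_two_pow
    omega
  have h2k : ((Fintype.card V : ℝ) + 1) ≤ (2 : ℝ) ^ (k : ℕ) := by
    exact_mod_cast h3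
  calc Real.logb 2 (Fintype.card V + 1) ≤ Real.logb 2 ((2 : ℝ) ^ k) := by
        exact (Real.logb_le_logb one_lt_two (by positivity) (by positivity)).2 h2k
      _ = k := by
        rw [Real.logb_pow, Real.logb_self_eq_one one_lt_two, mul_one]
end

section
/- For every n ≥ 2, the maximum size of an independent set in the edge-clique graph of the cocktail party graph cp(n) equals 4. -/
open SimpleGraph

/-- The cocktail party graph `cp n`: complement of a perfect matching on `2n`
vertices; vertex `(i, b)` is matched to `(i, !b)`. -/
def cp (n : ℕ) : SimpleGraph (Fin n × Bool) where
  Adj u v := u.1 ≠ v.1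
  symm := ⟨fun _ _ h => h.symm⟩
  loopless := ⟨fun _ h => h rfl⟩

/-- `A` is an independent set of edges of `G` (an independent set in the
edge-clique graph `K_e(G)`): no two members lie in a common clique. -/
def EdgeIndep {V : Type*} (G : SimpleGraph V) (A : Set (Sym2 V)) : Prop :=
  A ⊆ G.edgeSet ∧
    A.Pairwise fun e f => ¬ G.IsClique {x | x ∈ e ∨ x ∈ f}

/-- `α'(G) = α(K_e(G))`, the maximum size of an independent set of edges. -/
noncomputable def alphaPrime {V : Type*} (G : SimpleGraph V) : ℕ :=
  sSup {k | ∃ A : Finset (Sym2 V), EdgeIndep G ↑A ∧ A.card = k}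

/-!
Two edges of `cp n` lie in no common clique exactly when one of them contains a vertex and the
other contains its partner in the removed matching (`cp.partner`, written `v̄`). Fix an edge `uw`
of an independent set `A`; every other member contains `ū` or `w̄`. If two members contain `ū`,
they must be `ūx` and `ūx̄`, and then every further member contains `u`, hence is `uw̄`: so
`#A ≤ 4`. Otherwise at most one member contains `ū` and at most one contains `w̄`, so `#A ≤ 3`.
The four edges joining two matched pairs attain the bound.
-/

open Finset

theorem alphaPrime_eq_of_forall_card_le {V : Type*} {G : SimpleGraph V} {k : ℕ}
    (h_le : ∀ A : Finset (Sym2 V), EdgeIndep G ↑A → #A ≤ k)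
    {A : Finset (Sym2 V)} (hA : EdgeIndep G ↑A) (hcard : #A = k) :
    alphaPrime G = k :=
  IsGreatest.csSup_eq ⟨⟨A, hA, hcard⟩, by rintro _ ⟨B, hB, rfl⟩; exact h_le B hB⟩

namespace cp

variable {n : ℕ}

def partner (v : Fin n × Bool) : Fin n × Bool := (v.1, !v.2)

@[simp]
theorem partner_partner (v : Fin n × Bool) : partner (partner v) = v := by
  simp [partner]

theorem partner_ne (v : Fin n × Bool) : partner v ≠ v := by
  simp [partner, Prod.ext_iff]

theorem not_adj_partner (v : Fin n × Bool) : ¬ (cp n).Adj v (partner v) :=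
  fun h => h rfl

theorem eq_or_eq_partner_of_not_adj {u v : Fin n × Bool} (h : ¬ (cp n).Adj u v) :
    v = u ∨ v = partner u := by
  obtain ⟨i, a⟩ := u
  obtain ⟨j, b⟩ := v
  obtain rfl : j = i := (not_not.mp h).symm
  cases a <;> cases b <;> simp [partner]

theorem partner_not_mem {e : Sym2 (Fin n × Bool)} (he : e ∈ (cp n).edgeSet)
    {v : Fin n × Bool} (hv : v ∈ e) : partner v ∉ e := by
  obtain ⟨w, rfl⟩ := Sym2.mem_iff_exists.mp hv
  rw [mem_edgeSet] at he
  intro hp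
  rcases Sym2.mem_iff.mp hp with h | h
  · exact partner_ne v h
  · exact not_adj_partner v (h ▸ he)

theorem not_isClique_of_partner_mem {e f : Sym2 (Fin n × Bool)} {v : Fin n × Bool}
    (hv : v ∈ e) (hv' : partner v ∈ f) : ¬ (cp n).IsClique {x | x ∈ e ∨ x ∈ f} :=
  fun h => not_adj_partner v <| h (Or.inl hv) (Or.inr hv') (partner_ne v).symm

theorem exists_partner_mem_of_not_isClique {e f : Sym2 (Fin n × Bool)}
    (he : e ∈ (cp n).edgeSet) (hf : f ∈ (cp n).edgeSet)
    (h : ¬ (cp n).IsClique {x | x ∈ e ∨ x ∈ f}) : ∃ v ∈ e, partner v ∈ f := by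
  rw [IsClique, Set.Pairwise] at h
  push Not at h
  obtain ⟨u, hu, v, hv, huv, hadj⟩ := h
  obtain rfl : v = partner u := (eq_or_eq_partner_of_not_adj hadj).resolve_left huv.symm
  rcases hu with hu | hu <;> rcases hv with hv | hv
  · exact absurd hv (partner_not_mem he hu)
  · exact ⟨u, hu, hv⟩
  · exact ⟨partner u, hv, by simpa using hu⟩
  · exact absurd hv (partner_not_mem hf hu)

end cp

namespace EdgeIndep

open cp

variable {n : ℕ} {A : Finset (Sym2 (Fin n × Bool))}

theorem partner_mem_or (hA : EdgeIndep (cp n) ↑A) {u w : Fin n × Bool} {f : Sym2 (Fin n × Bool)}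
    (he : s(u, w) ∈ A) (hf : f ∈ A) (hne : s(u, w) ≠ f) :
    partner u ∈ f ∨ partner w ∈ f := by
  obtain ⟨v, hv, hv'⟩ := exists_partner_mem_of_not_isClique (hA.1 he) (hA.1 hf) (hA.2 he hf hne)
  rcases Sym2.mem_iff.mp hv with rfl | rfl
  exacts [Or.inl hv', Or.inr hv']

theorem eq_of_two_contain_partner (hA : EdgeIndep (cp n) ↑A) {u w : Fin n × Bool}
    {f g h : Sym2 (Fin n × Bool)} (he : s(u, w) ∈ A) (hf : f ∈ A) (hg : g ∈ A) (hh : h ∈ A)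
    (hfg : f ≠ g) (hfh : f ≠ h) (hgh : g ≠ h)
    (huf : partner u ∈ f) (hug : partner u ∈ g) :
    h = s(u, w) ∨ h = s(u, partner w) := by
  have hfE := hA.1 hf
  have hgE := hA.1 hg
  have hhE := hA.1 hh
  obtain ⟨x, rfl⟩ := Sym2.mem_iff_exists.mp huf
  have hxg : partner x ∈ g := by
    simpa using (hA.partner_mem_or hf hg hfg).resolve_left (by simpa using partner_not_mem hgE hug)
  have hxu : x ≠ u := by
    rintro rfl
    exact partner_not_mem hfE (Sym2.mem_mk_right _ _) (by simp)
  obtain rfl : g = s(partner u, partner x) :=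
    (Sym2.mem_and_mem_iff (by simpa [partner, Prod.ext_iff] using hxu.symm)).mp ⟨hug, hxg⟩
  have huh : u ∈ h := by
    have hfh' := hA.partner_mem_or hf hh hfh
    have hgh' := hA.partner_mem_or hg hh hgh
    simp only [partner_partner] at hfh' hgh'
    rcases hfh' with hu | hx
    · exact hu
    · exact hgh'.resolve_right (fun hx' => partner_not_mem hhE hx' (by simpa using hx))
  by_cases heh : h = s(u, w)
  · exact Or.inl heh
  have hwh : partner w ∈ h :=
    (hA.partner_mem_or he hh (Ne.symm heh)).resolve_left (partner_not_mem hhE huh)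
  have huw : u ≠ partner w := by
    rintro rfl
    exact partner_not_mem (hA.1 he) (Sym2.mem_mk_right _ _) (by simp)
  exact Or.inr ((Sym2.mem_and_mem_iff huw).mp ⟨huh, hwh⟩)

theorem card_le_four_of_two_contain_partner (hA : EdgeIndep (cp n) ↑A) {u w : Fin n × Bool}
    (he : s(u, w) ∈ A) (hP : 1 < #(A.filter (partner u ∈ ·))) : #A ≤ 4 := by
  classical
  obtain ⟨f, hf, g, hg, hfg⟩ := one_lt_card.mp hP
  rw [mem_filter] at hf hg
  calc #A ≤ #{s(u, w), s(u, partner w), f, g} := card_le_card fun h hh => by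
        by_cases hfh : f = h
        · simp [hfh]
        by_cases hgh : g = h
        · simp [hgh]
        rcases hA.eq_of_two_contain_partner he hf.1 hg.1 hh hfg hfh hgh hf.2 hg.2 with rfl | rfl <;>
          simp
    _ ≤ 4 := Finset.card_le_four

theorem card_le_four (hA : EdgeIndep (cp n) ↑A) : #A ≤ 4 := by
  classical
  obtain rfl | ⟨e, he⟩ := A.eq_empty_or_nonempty
  · simp
  induction e using Sym2.inductionOn with
  | hf u w =>
  by_cases hP : 1 < #(A.filter (partner u ∈ ·))
  · exact hA.card_le_four_of_two_contain_partner he hP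
  by_cases hQ : 1 < #(A.filter (partner w ∈ ·))
  · exact hA.card_le_four_of_two_contain_partner (Sym2.eq_swap ▸ he) hQ
  have hcover : A ⊆ insert s(u, w) (A.filter (partner u ∈ ·) ∪ A.filter (partner w ∈ ·)) :=
    fun f hf => by
      by_cases hef : s(u, w) = f
      · simp [hef]
      rcases hA.partner_mem_or he hf hef with h | h <;> simp [hf, h]
  calc #A ≤ #(A.filter (partner u ∈ ·) ∪ A.filter (partner w ∈ ·)) + 1 :=
        (card_le_card hcover).trans (card_insert_le _ _)
    _ ≤ #(A.filter (partner u ∈ ·)) + #(A.filter (partner w ∈ ·)) + 1 := by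
        gcongr; exact card_union_le _ _
    _ ≤ 4 := by omega

end EdgeIndep

namespace cp

variable {n : ℕ}

def edgesBetween (i j : Fin n) : Finset (Sym2 (Fin n × Bool)) :=
  univ.image fun p : Bool × Bool => s((i, p.1), (j, p.2))

theorem card_edgesBetween {i j : Fin n} (hij : i ≠ j) : #(edgesBetween i j) = 4 := by
  rw [edgesBetween, card_image_of_injective]
  · rfl
  rintro ⟨a, b⟩ ⟨c, d⟩ h
  simpa [Sym2.eq_iff, hij, Ne.symm hij] using h

theorem edgeIndep_edgesBetween {i j : Fin n} (hij : i ≠ j) :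
    EdgeIndep (cp n) ↑(edgesBetween i j) := by
  rw [edgesBetween, coe_image, coe_univ, Set.image_univ]
  constructor
  · rintro _ ⟨p, rfl⟩
    exact hij
  · rintro _ ⟨⟨a, b⟩, rfl⟩ _ ⟨⟨c, d⟩, rfl⟩ hne
    by_cases hac : c = a
    · subst hac
      obtain rfl : d = !b := by cases b <;> cases d <;> simp_all
      exact not_isClique_of_partner_mem (v := (j, b))
        (Sym2.mem_mk_right _ _) (Sym2.mem_mk_right _ _)
    · obtain rfl : c = !a := by cases a <;> cases c <;> simp_all
      exact not_isClique_of_partner_mem (v := (i, a)) (Sym2.mem_mk_left _ _) (Sym2.mem_mk_left _ _)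

end cp

/-- For `n ≥ 2`, `α(K_e(cp(n))) = 4`. -/
theorem alphaPrime_cp (n : ℕ) (hn : 2 ≤ n) : alphaPrime (cp n) = 4 := by
  have h01 : (⟨0, by omega⟩ : Fin n) ≠ ⟨1, by omega⟩ := by simp
  exact alphaPrime_eq_of_forall_card_le (fun _ hA => hA.card_le_four)
    (cp.edgeIndep_edgesBetween h01) (cp.card_edgesBetween h01)
end

section
/- If G is a connected trivially perfect graph, then the maximum number of pairwise independent edges of G (i.e., the independence number of K_e(G)) equals the edge-clique covering number θ_e(G). -/
open SimpleGraph

/-!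
In a `{C₄, P₄}`-free graph a vertex `u` of maximum degree is adjacent to every other vertex of
its component: otherwise there is a path `u - a - b` with `u ≁ b`, and since `deg a ≤ deg u` some
neighbour `c ≠ a` of `u` is not adjacent to `a`; then `c, u, a, b` induce a `C₄` or a `P₄`.

Delete the edges at `u` and let `p` be the number of pendant neighbours of `u`. A pendant edge
`ux` shares a clique with no other edge, so `α'` grows by at least `p`. Every other edge `ux`
has `x` adjacent to some `y ≠ u`, and a clique of the smaller graph covering `xy` lies in the
neighbourhood of `u`, so adding `u` to it covers `ux`; hence `θ_e` grows by at most `p`. As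
`α' ≤ θ_e` always, induction on the graph gives equality.
-/

open Finset

section EdgeCliques

variable {V : Type*} {G : SimpleGraph V}

lemma EdgeIndep.empty : EdgeIndep G ∅ := ⟨Set.empty_subset _, Set.pairwise_empty _⟩

lemma bddAbove_edgeIndep_card [Fintype V] :
    BddAbove {k | ∃ A : Finset (Sym2 V), EdgeIndep G ↑A ∧ #A = k} := by
  classical
  refine bddAbove_def.mpr ⟨Fintype.card (Sym2 V), ?_⟩
  rintro k ⟨A, -, rfl⟩
  exact card_le_univ A

lemma EdgeIndep.card_le_alphaPrime [Fintype V] {A : Finset (Sym2 V)} (hA : EdgeIndep G ↑A) :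
    #A ≤ alphaPrime G :=
  le_csSup bddAbove_edgeIndep_card ⟨A, hA, rfl⟩

lemma exists_edgeIndep_card_eq_alphaPrime [Fintype V] (G : SimpleGraph V) :
    ∃ A : Finset (Sym2 V), EdgeIndep G ↑A ∧ #A = alphaPrime G := by
  have h : alphaPrime G ∈ {k | ∃ A : Finset (Sym2 V), EdgeIndep G ↑A ∧ #A = k} :=
    Nat.sSup_mem ⟨0, ∅, by simpa using EdgeIndep.empty, rfl⟩ bddAbove_edgeIndep_card
  exact h

lemma isEdgeCliqueCover_iff {F : Finset (Finset V)} :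
    IsEdgeCliqueCover G F ↔
      (∀ C ∈ F, G.IsClique (C : Set V)) ∧ ∀ a b, G.Adj a b → ∃ C ∈ F, a ∈ C ∧ b ∈ C := by
  simp [IsEdgeCliqueCover, Sym2.forall]

lemma thetaE_le_card {F : Finset (Finset V)} (hF : IsEdgeCliqueCover G F) : thetaE G ≤ #F :=
  Nat.sInf_le ⟨F, hF, rfl⟩

lemma exists_isEdgeCliqueCover_card_eq_thetaE [Fintype V] (G : SimpleGraph V) :
    ∃ F : Finset (Finset V), IsEdgeCliqueCover G F ∧ #F = thetaE G := by
  classical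
  have hcover : IsEdgeCliqueCover G {C | G.IsClique (C : Set V)} :=
    isEdgeCliqueCover_iff.mpr ⟨fun C hC => (mem_filter.mp hC).2,
      fun a b hab => ⟨{a, b}, by simp [hab], by simp, by simp⟩⟩
  have h : thetaE G ∈ {n | ∃ F : Finset (Finset V), IsEdgeCliqueCover G F ∧ #F = n} :=
    Nat.sInf_mem ⟨_, _, hcover, rfl⟩
  exact h

lemma thetaE_bot : thetaE (⊥ : SimpleGraph V) = 0 :=
  Nat.le_zero.mp (thetaE_le_card (F := ∅) (isEdgeCliqueCover_iff.mpr (by simp)))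

lemma EdgeIndep.card_le_card {A : Finset (Sym2 V)} (hA : EdgeIndep G ↑A)
    {F : Finset (Finset V)} (hF : IsEdgeCliqueCover G F) : #A ≤ #F := by
  refine card_le_card_of_forall_subsingleton (fun e C => ∀ x ∈ e, x ∈ C)
    (fun e he => hF.2 e (hA.1 he)) ?_
  rintro C hC e ⟨he, heC⟩ f ⟨hf, hfC⟩
  by_contra hef
  exact hA.2 he hf hef ((hF.1 C hC).subset fun x hx => hx.elim (heC x) (hfC x))

lemma alphaPrime_le_thetaE [Fintype V] (G : SimpleGraph V) : alphaPrime G ≤ thetaE G := by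
  obtain ⟨A, hA, hAcard⟩ := exists_edgeIndep_card_eq_alphaPrime G
  obtain ⟨F, hF, hFcard⟩ := exists_isEdgeCliqueCover_card_eq_thetaE G
  exact hAcard ▸ hFcard ▸ hA.card_le_card hF

end EdgeCliques

namespace SimpleGraph

variable {V : Type*} {G : SimpleGraph V}

def IsTriviallyPerfect (G : SimpleGraph V) : Prop :=
  ¬ cycleGraph 4 ⊴ G ∧ ¬ pathGraph 4 ⊴ G

lemma cycleGraph_four_isIndContained {a b c d : V} (hab : G.Adj a b) (hbc : G.Adj b c)
    (hcd : G.Adj c d) (hda : G.Adj d a) (hac : ¬ G.Adj a c) (hbd : ¬ G.Adj b d)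
    (hac' : a ≠ c) (hbd' : b ≠ d) : cycleGraph 4 ⊴ G := by
  have hinj : Function.Injective ![a, b, c, d] := by
    intro i j hij
    fin_cases i <;> fin_cases j <;>
      simp_all [hab.ne, hbc.ne, hcd.ne, hda.ne, hab.ne.symm, hbc.ne.symm, hcd.ne.symm, hda.ne.symm]
  refine ⟨⟨⟨![a, b, c, d], hinj⟩, fun {i j} => ?_⟩⟩
  fin_cases i <;> fin_cases j <;>
    simp [cycleGraph_adj, hab, hbc, hcd, hda, hac, hbd, hab.symm, hbc.symm, hcd.symm, hda.symm,
      G.adj_comm c a, G.adj_comm d b] <;> decide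

lemma pathGraph_four_isIndContained {a b c d : V} (hab : G.Adj a b) (hbc : G.Adj b c)
    (hcd : G.Adj c d) (hac : ¬ G.Adj a c) (had : ¬ G.Adj a d) (hbd : ¬ G.Adj b d)
    (hac' : a ≠ c) (had' : a ≠ d) (hbd' : b ≠ d) : pathGraph 4 ⊴ G := by
  have hinj : Function.Injective ![a, b, c, d] := by
    intro i j hij
    fin_cases i <;> fin_cases j <;>
      simp_all [hab.ne, hbc.ne, hcd.ne, hab.ne.symm, hbc.ne.symm, hcd.ne.symm]
  refine ⟨⟨⟨![a, b, c, d], hinj⟩, fun {i j} => ?_⟩⟩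
  fin_cases i <;> fin_cases j <;>
    simp [pathGraph_adj, hab, hbc, hcd, hac, hbd, had, hab.symm, hbc.symm, hcd.symm,
      G.adj_comm c a, G.adj_comm d b, G.adj_comm d a]

lemma IsIndContained.of_deleteIncidenceSet {W : Type*} {H : SimpleGraph W} {u : V}
    (hH : ∀ i, ∃ j, H.Adj i j) (h : H ⊴ G.deleteIncidenceSet u) : H ⊴ G := by
  obtain ⟨f⟩ := h
  have hne : ∀ i, f i ≠ u := fun i =>
    let ⟨_, hij⟩ := hH i
    (deleteIncidenceSet_adj.mp (f.map_rel_iff.mpr hij)).2.1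
  exact ⟨⟨f.toEmbedding, fun {i j} => by
    rw [← f.map_rel_iff, deleteIncidenceSet_adj]
    simp [hne]⟩⟩

lemma IsTriviallyPerfect.deleteIncidenceSet (hG : G.IsTriviallyPerfect) (u : V) :
    (G.deleteIncidenceSet u).IsTriviallyPerfect :=
  ⟨fun h => hG.1 (h.of_deleteIncidenceSet (by decide)),
    fun h => hG.2 (h.of_deleteIncidenceSet (by simp only [pathGraph_adj]; decide))⟩

lemma Reachable.mem_of_forall_adj_mem {S : Set V} (hS : ∀ a b, G.Adj a b → a ∈ S → b ∈ S)
    {u x : V} (hu : u ∈ S) (h : G.Reachable u x) : x ∈ S := by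
  obtain ⟨p⟩ := h
  induction p with
  | nil => exact hu
  | cons hab _ ih => exact ih (hS _ _ hab hu)

lemma exists_adj_not_adj_of_degree_le [Fintype V] [DecidableRel G.Adj] {u a b : V}
    (hdeg : G.degree a ≤ G.degree u) (hua : G.Adj u a) (hab : G.Adj a b) (hub : ¬ G.Adj u b)
    (hbu : b ≠ u) : ∃ c, c ≠ a ∧ G.Adj u c ∧ ¬ G.Adj a c := by
  classical
  have hsub : {b, u} ⊆ G.neighborFinset a \ G.neighborFinset u := by
    simp [insert_subset_iff, hab, hub, hua.symm]
  have hcard : 1 < #(G.neighborFinset u \ G.neighborFinset a) := calc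
    1 < #{b, u} := by rw [card_pair hbu]; norm_num
    _ ≤ #(G.neighborFinset a \ G.neighborFinset u) := card_le_card hsub
    _ ≤ #(G.neighborFinset u \ G.neighborFinset a) :=
      card_sdiff_le_card_sdiff_iff.mpr (by simpa using hdeg)
  obtain ⟨c, hc, hca⟩ := exists_mem_ne hcard a
  simp only [mem_sdiff, mem_neighborFinset] at hc
  exact ⟨c, hca, hc⟩

lemma IsTriviallyPerfect.adj_of_adj_of_adj [Fintype V] [DecidableRel G.Adj]
    (hG : G.IsTriviallyPerfect) {u a b : V} (hmax : ∀ w, G.degree w ≤ G.degree u)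
    (hua : G.Adj u a) (hab : G.Adj a b) (hbu : b ≠ u) : G.Adj u b := by
  by_contra hub
  obtain ⟨c, hca, huc, hac⟩ := exists_adj_not_adj_of_degree_le (hmax a) hua hab hub hbu
  have hcb : c ≠ b := fun h => hub (h ▸ huc)
  by_cases hcb' : G.Adj c b
  · exact hG.1 (cycleGraph_four_isIndContained huc.symm hua hab hcb'.symm
      (fun h => hac h.symm) hub hca hbu.symm)
  · exact hG.2 (pathGraph_four_isIndContained huc.symm hua hab
      (fun h => hac h.symm) hcb' hub hca hcb hbu.symm)

lemma IsTriviallyPerfect.adj_of_reachable [Fintype V] [DecidableRel G.Adj]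
    (hG : G.IsTriviallyPerfect) {u x : V} (hmax : ∀ w, G.degree w ≤ G.degree u)
    (hx : G.Reachable u x) (hxu : x ≠ u) : G.Adj u x := by
  have hS : x ∈ {y | y = u ∨ G.Adj u y} := by
    refine hx.mem_of_forall_adj_mem ?_ (Or.inl rfl)
    rintro a b hab (rfl | hua)
    · exact Or.inr hab
    · exact or_iff_not_imp_left.mpr (hG.adj_of_adj_of_adj hmax hua hab)
  exact hS.resolve_left hxu

lemma exists_adj_of_forall_degree_le [Fintype V] [DecidableRel G.Adj] (hG : G ≠ ⊥) :
    ∃ u x, G.Adj u x ∧ ∀ w, G.degree w ≤ G.degree u := by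
  obtain ⟨v, w, hvw⟩ := ne_bot_iff_exists_adj.mp hG
  have : Nonempty V := ⟨v⟩
  obtain ⟨u, hu⟩ := G.exists_maximal_degree_vertex
  have hmax : ∀ w, G.degree w ≤ G.degree u := fun w => hu ▸ G.degree_le_maxDegree w
  have hdeg : 0 < G.degree u :=
    ((G.degree_pos_iff_exists_adj v).mpr ⟨w, hvw⟩).trans_le (hmax v)
  obtain ⟨x, hux⟩ := (G.degree_pos_iff_exists_adj u).mp hdeg
  exact ⟨u, x, hux, hmax⟩

lemma deleteIncidenceSet_lt {u x : V} (hux : G.Adj u x) : G.deleteIncidenceSet u < G :=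
  (G.deleteIncidenceSet_le u).lt_of_ne fun h => (deleteIncidenceSet_adj.mp (h ▸ hux)).2.1 rfl

open Classical in
noncomputable def pendantNeighborFinset [Fintype V] (G : SimpleGraph V) (u : V) : Finset V :=
  {x | G.Adj u x ∧ ∀ y, G.Adj x y → y = u}

lemma mem_pendantNeighborFinset [Fintype V] {u x : V} :
    x ∈ G.pendantNeighborFinset u ↔ G.Adj u x ∧ ∀ y, G.Adj x y → y = u := by
  simp [pendantNeighborFinset]

lemma ne_of_mem_edgeSet_deleteIncidenceSet {u x : V} {e : Sym2 V}
    (he : e ∈ (G.deleteIncidenceSet u).edgeSet) (hx : x ∈ e) : x ≠ u := by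
  rintro rfl
  rw [edgeSet_deleteIncidenceSet] at he
  exact he.2 ⟨he.1, hx⟩

lemma eq_of_isClique_of_mem_pendantNeighborFinset [Fintype V] {u x : V}
    (hx : x ∈ G.pendantNeighborFinset u) {S : Set V} (hS : G.IsClique S) (hxS : x ∈ S)
    {f : Sym2 V} (hf : f ∈ G.edgeSet) (hfS : ∀ z ∈ f, z ∈ S) : f = s(u, x) := by
  obtain ⟨-, hpend⟩ := mem_pendantNeighborFinset.mp hx
  have hux : ∀ z ∈ f, z = u ∨ z = x := fun z hz =>
    or_iff_not_imp_right.mpr fun hzx => hpend z (hS hxS (hfS z hz) (Ne.symm hzx))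
  induction f using Sym2.ind with
  | h a b =>
    have hab : a ≠ b := G.ne_of_adj hf
    rcases hux a (Sym2.mem_mk_left a b) with rfl | rfl <;>
      rcases hux b (Sym2.mem_mk_right a b) with rfl | rfl
    exacts [absurd rfl hab, rfl, Sym2.eq_swap, absurd rfl hab]

open Classical in
noncomputable def insertIfSubsetNeighborSet [DecidableEq V] (G : SimpleGraph V) (u : V)
    (C : Finset V) : Finset V :=
  if (C : Set V) ⊆ G.neighborSet u then insert u C else C

lemma insertIfSubsetNeighborSet_of_subset [DecidableEq V] {u : V} {C : Finset V}
    (h : (C : Set V) ⊆ G.neighborSet u) : G.insertIfSubsetNeighborSet u C = insert u C :=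
  if_pos h

lemma subset_insertIfSubsetNeighborSet [DecidableEq V] (u : V) (C : Finset V) :
    C ⊆ G.insertIfSubsetNeighborSet u C := by
  classical
  unfold insertIfSubsetNeighborSet
  split_ifs
  exacts [subset_insert u C, subset_rfl]

lemma IsClique.insertIfSubsetNeighborSet [DecidableEq V] {C : Finset V}
    (hC : G.IsClique (C : Set V)) (u : V) :
    G.IsClique (G.insertIfSubsetNeighborSet u C : Set V) := by
  classical
  unfold SimpleGraph.insertIfSubsetNeighborSet
  split_ifs with h
  · rw [coe_insert, isClique_insert]
    exact ⟨hC, fun b hb _ => h hb⟩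
  · exact hC

end SimpleGraph

section Deletion

variable {V : Type*} {G : SimpleGraph V}

lemma EdgeIndep.of_deleteIncidenceSet {A : Set (Sym2 V)} {u : V}
    (hA : EdgeIndep (G.deleteIncidenceSet u) A) : EdgeIndep G A := by
  refine ⟨hA.1.trans (edgeSet_mono (G.deleteIncidenceSet_le u)),
    fun e he f hf hef hcl => hA.2 he hf hef ?_⟩
  have hne : ∀ z ∈ {z | z ∈ e ∨ z ∈ f}, z ≠ u := fun z hz =>
    hz.elim (ne_of_mem_edgeSet_deleteIncidenceSet (hA.1 he))
      (ne_of_mem_edgeSet_deleteIncidenceSet (hA.1 hf))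
  exact fun z hz w hw hzw => deleteIncidenceSet_adj.mpr ⟨hcl hz hw hzw, hne z hz, hne w hw⟩

lemma EdgeIndep.union_pendant [Fintype V] {A : Set (Sym2 V)} (hA : EdgeIndep G A) (u : V) :
    EdgeIndep G (A ∪ (fun x => s(u, x)) '' G.pendantNeighborFinset u) := by
  have hP : (fun x => s(u, x)) '' G.pendantNeighborFinset u ⊆ G.edgeSet := by
    rintro _ ⟨x, hx, rfl⟩
    exact (mem_pendantNeighborFinset.mp hx).1
  have key : ∀ e ∈ G.edgeSet, ∀ x ∈ G.pendantNeighborFinset u, e ≠ s(u, x) →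
      ¬ G.IsClique {z | z ∈ e ∨ z ∈ s(u, x)} ∧ ¬ G.IsClique {z | z ∈ s(u, x) ∨ z ∈ e} := by
    refine fun e he x hx hne => ⟨fun hcl => hne ?_, fun hcl => hne ?_⟩
    · exact eq_of_isClique_of_mem_pendantNeighborFinset hx hcl
        (Or.inr (Sym2.mem_mk_right u x)) he fun z => Or.inl
    · exact eq_of_isClique_of_mem_pendantNeighborFinset hx hcl
        (Or.inl (Sym2.mem_mk_right u x)) he fun z => Or.inr
  refine ⟨Set.union_subset hA.1 hP, Set.pairwise_union.mpr ⟨hA.2, ?_, ?_⟩⟩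
  · rintro _ ⟨x, hx, rfl⟩ _ ⟨y, hy, rfl⟩ hne
    exact (key _ (hP ⟨y, hy, rfl⟩) x hx hne.symm).2
  · rintro e he _ ⟨x, hx, rfl⟩ hne
    exact key e (hA.1 he) x hx hne

lemma alphaPrime_deleteIncidenceSet_add_card_le [Fintype V] (G : SimpleGraph V) (u : V) :
    alphaPrime (G.deleteIncidenceSet u) + #(G.pendantNeighborFinset u) ≤ alphaPrime G := by
  classical
  obtain ⟨A, hA, hcard⟩ := exists_edgeIndep_card_eq_alphaPrime (G.deleteIncidenceSet u)
  set P := (G.pendantNeighborFinset u).image (fun x => s(u, x))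
  have hdisj : Disjoint A P := disjoint_right.mpr fun e he heA => by
    obtain ⟨x, -, rfl⟩ := mem_image.mp he
    exact ne_of_mem_edgeSet_deleteIncidenceSet (hA.1 heA) (Sym2.mem_mk_left u x) rfl
  have hP : #P = #(G.pendantNeighborFinset u) :=
    card_image_of_injective _ fun _ _ => Sym2.congr_right.mp
  calc alphaPrime (G.deleteIncidenceSet u) + #(G.pendantNeighborFinset u) = #(A ∪ P) := by
        rw [card_union_of_disjoint hdisj, hP, hcard]
    _ ≤ alphaPrime G := by
        refine EdgeIndep.card_le_alphaPrime ?_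
        rw [coe_union, coe_image]
        exact hA.of_deleteIncidenceSet.union_pendant u

lemma IsEdgeCliqueCover.exists_mem_subset_neighborSet [Fintype V] {u x : V}
    {F : Finset (Finset V)} (hF : IsEdgeCliqueCover (G.deleteIncidenceSet u) F)
    (hu : ∀ y, G.Reachable u y → y ≠ u → G.Adj u y) (hux : G.Adj u x)
    (hx : x ∉ G.pendantNeighborFinset u) : ∃ C ∈ F, x ∈ C ∧ (C : Set V) ⊆ G.neighborSet u := by
  obtain ⟨y, hxy, hyu⟩ : ∃ y, G.Adj x y ∧ y ≠ u := by
    simpa [mem_pendantNeighborFinset, hux] using hx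
  obtain ⟨C, hC, hxC, -⟩ :=
    (isEdgeCliqueCover_iff.mp hF).2 x y (deleteIncidenceSet_adj.mpr ⟨hxy, hux.ne', hyu⟩)
  refine ⟨C, hC, hxC, fun z hz => ?_⟩
  obtain rfl | hxz := eq_or_ne x z
  · exact hux
  · obtain ⟨hxz', -, hzu⟩ := deleteIncidenceSet_adj.mp (hF.1 C hC hxC hz hxz)
    exact hu z (hux.reachable.trans hxz'.reachable) hzu

lemma thetaE_le_thetaE_deleteIncidenceSet_add_card [Fintype V] {u : V}
    (hu : ∀ x, G.Reachable u x → x ≠ u → G.Adj u x) :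
    thetaE G ≤ thetaE (G.deleteIncidenceSet u) + #(G.pendantNeighborFinset u) := by
  classical
  obtain ⟨F, hF, hcard⟩ := exists_isEdgeCliqueCover_card_eq_thetaE (G.deleteIncidenceSet u)
  set F' := F.image (G.insertIfSubsetNeighborSet u) ∪
    (G.pendantNeighborFinset u).image (fun x => {u, x})
  have hcliques : ∀ C ∈ F', G.IsClique (C : Set V) := by
    simp only [F', mem_union, mem_image]
    rintro _ (⟨C, hC, rfl⟩ | ⟨x, hx, rfl⟩)
    · exact ((hF.1 C hC).mono (G.deleteIncidenceSet_le u)).insertIfSubsetNeighborSet u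
    · simpa using fun _ => (mem_pendantNeighborFinset.mp hx).1
  have hcover_u : ∀ x, G.Adj u x → ∃ C ∈ F', u ∈ C ∧ x ∈ C := by
    intro x hux
    by_cases hx : x ∈ G.pendantNeighborFinset u
    · exact ⟨{u, x}, mem_union_right _ (mem_image_of_mem _ hx), by simp, by simp⟩
    · obtain ⟨C, hC, hxC, hCu⟩ := hF.exists_mem_subset_neighborSet hu hux hx
      refine ⟨_, mem_union_left _ (mem_image_of_mem _ hC), ?_⟩
      simp [insertIfSubsetNeighborSet_of_subset hCu, hxC]
  have hcover : ∀ a b, G.Adj a b → ∃ C ∈ F', a ∈ C ∧ b ∈ C := by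
    intro a b hab
    by_cases ha : a = u
    · exact ha ▸ hcover_u b (ha ▸ hab)
    by_cases hb : b = u
    · obtain ⟨C, hC, huC, haC⟩ := hcover_u a (hb ▸ hab.symm)
      exact ⟨C, hC, haC, hb ▸ huC⟩
    obtain ⟨C, hC, haC, hbC⟩ :=
      (isEdgeCliqueCover_iff.mp hF).2 a b (deleteIncidenceSet_adj.mpr ⟨hab, ha, hb⟩)
    exact ⟨_, mem_union_left _ (mem_image_of_mem _ hC),
      subset_insertIfSubsetNeighborSet u C haC, subset_insertIfSubsetNeighborSet u C hbC⟩
  calc thetaE G ≤ #F' := thetaE_le_card (isEdgeCliqueCover_iff.mpr ⟨hcliques, hcover⟩)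
    _ ≤ #F + #(G.pendantNeighborFinset u) :=
      (card_union_le _ _).trans (add_le_add card_image_le card_image_le)
    _ = _ := by rw [hcard]

theorem SimpleGraph.IsTriviallyPerfect.alphaPrime_eq_thetaE [Fintype V]
    (hG : G.IsTriviallyPerfect) : alphaPrime G = thetaE G := by
  classical
  induction G using WellFoundedLT.induction with
  | ind G ih =>
  refine le_antisymm (alphaPrime_le_thetaE G) ?_
  obtain rfl | hne := eq_or_ne G ⊥
  · simp [thetaE_bot]
  obtain ⟨u, x, hux, hmax⟩ := exists_adj_of_forall_degree_le hne
  calc thetaE G ≤ thetaE (G.deleteIncidenceSet u) + #(G.pendantNeighborFinset u) :=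
        thetaE_le_thetaE_deleteIncidenceSet_add_card fun _ => hG.adj_of_reachable hmax
    _ = alphaPrime (G.deleteIncidenceSet u) + #(G.pendantNeighborFinset u) := by
        rw [ih _ (deleteIncidenceSet_lt hux) (hG.deleteIncidenceSet u)]
    _ ≤ alphaPrime G := alphaPrime_deleteIncidenceSet_add_card_le G u

end Deletion

theorem alphaPrime_eq_thetaE_of_triviallyPerfect_general {V : Type*} [Fintype V]
    (G : SimpleGraph V)
    (hC4 : ¬ Nonempty (cycleGraph 4 ↪g G))
    (hP4 : ¬ Nonempty (pathGraph 4 ↪g G)) :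
    alphaPrime G = thetaE G :=
  IsTriviallyPerfect.alphaPrime_eq_thetaE ⟨hC4, hP4⟩

/-- For a connected trivially perfect graph (no induced `C₄`, no induced `P₄`),
`α'(G) = θ_e(G)`. -/
theorem alphaPrime_eq_thetaE_of_triviallyPerfect {V : Type*} [Fintype V]
    (G : SimpleGraph V) (hconn : G.Connected)
    (hC4 : ¬ Nonempty (cycleGraph 4 ↪g G))
    (hP4 : ¬ Nonempty (pathGraph 4 ↪g G)) :
    alphaPrime G = thetaE G :=
  alphaPrime_eq_thetaE_of_triviallyPerfect_general G hC4 hP4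
end

section
/- If G is a cograph, then the maximum size of a set of edges of G no two of which lie in a common clique equals the maximum, over all independent sets A of vertices of G, of the sum over x ∈ A of α(G[N(x)]), the independence number of the subgraph induced by the neighborhood of x. -/
open SimpleGraph

/-- The independence number `α(G)`. -/
noncomputable def indepNumber {V : Type*} (G : SimpleGraph V) : ℕ :=
  sSup {k | ∃ s : Finset V, (↑s : Set V).Pairwise (fun a b => ¬ G.Adj a b) ∧ s.card = k}

/-!
Stars centred at an independent set `A`, the star at `x` reaching a maximum independent set of
`N(x)`, form an independent edge set; this gives `≥` in any graph.

For `≤`, a cograph on at least two vertices is a join or a disjoint union of two smaller cographs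
(Seinsche), so one inducts along the cotree, carrying a set `t` joined to the current part `s`.
Disjoint unions are additive. For a join `s₁ + s₂`, if every edge meets `s₁` (or `s₂`), induction
applies with the other side absorbed into `t`. Otherwise every edge runs between two of the
mutually joined parts `s₁, s₂, t`. Edges between joined parts `X, Y` form an independent set of
the strong product `H[X] ⊠ H[Y]`, so there are at most `α(X) α(Y)` of them, a cograph being
covered by `α` cliques; and the edges from one part towards the two others have unrelated
endpoints in it. These constraints bound the total by `α(s₁) max(α(s₂), α(t))` or
`α(s₂) max(α(s₁), α(t))`, the size of a star packing centred at a maximum independent set of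
`s₁` or of `s₂`.
-/

open Finset
open scoped Classical

namespace SimpleGraph

variable {V : Type*} {H : SimpleGraph V} {M : Finset (Sym2 V)} {X Y Z : Finset V}

lemma pathGraph_four_isIndContained_of_adj {a b c d : V} (hab : H.Adj a b) (hbc : H.Adj b c)
    (hcd : H.Adj c d) (hac : ¬ H.Adj a c) (had : ¬ H.Adj a d) (hbd : ¬ H.Adj b d) :
    pathGraph 4 ⊴ H := by
  refine ⟨⟨⟨![a, b, c, d], ?_⟩, ?_⟩⟩
  · intro i j hij
    fin_cases i <;> fin_cases j <;> simp_all [adj_comm]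
  · intro i j
    change H.Adj (![a, b, c, d] i) (![a, b, c, d] j) ↔ _
    fin_cases i <;> fin_cases j <;> simp_all [pathGraph_adj, adj_comm]

lemma pathGraph_four_isIndContained_compl_self : pathGraph 4 ⊴ (pathGraph 4)ᶜ :=
  pathGraph_four_isIndContained_of_adj (a := 1) (b := 3) (c := 0) (d := 2)
    (by simp [pathGraph_adj]) (by simp [pathGraph_adj]) (by simp [pathGraph_adj])
    (by simp [pathGraph_adj]) (by simp [pathGraph_adj]) (by simp [pathGraph_adj])

theorem pathGraph_four_isIndContained_compl_iff : pathGraph 4 ⊴ Hᶜ ↔ pathGraph 4 ⊴ H :=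
  ⟨fun h => by simpa using pathGraph_four_isIndContained_compl_self.trans h.compl,
    fun h => pathGraph_four_isIndContained_compl_self.trans h.compl⟩

/-! ### Seinsche's theorem -/

def IsJoinOn (H : SimpleGraph V) (s : Finset V) : Prop :=
  ∃ s₁ s₂ : Finset V, s₁.Nonempty ∧ s₂.Nonempty ∧ s₁ ∪ s₂ = s ∧ H.IsCompleteBetween ↑s₁ ↑s₂

lemma isJoinOn_insert_of_adj (hP4 : ¬ pathGraph 4 ⊴ H) {A B : Finset V} {u v : V}
    (hB : B.Nonempty) (hAB : H.IsCompleteBetween ↑A ↑B) (hv : v ∉ A ∪ B)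
    (hu : u ∈ A) (hvu : H.Adj v u) : H.IsJoinOn (insert v (A ∪ B)) := by
  by_cases hvB : ∀ b ∈ B, H.Adj v b
  · refine ⟨insert v A, B, insert_nonempty _ _, hB, by rw [insert_union], ?_⟩
    intro x hx y hy
    obtain rfl | hx := mem_insert.1 hx
    exacts [hvB y hy, hAB hx hy]
  push Not at hvB
  obtain ⟨b, hb, hvb⟩ := hvB
  refine ⟨{a ∈ A | H.Adj v a}, insert v (A ∪ B) \ {a ∈ A | H.Adj v a},
    ⟨u, mem_filter.2 ⟨hu, hvu⟩⟩, ⟨v, by simp⟩, union_sdiff_of_subset ?_, ?_⟩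
  · exact (filter_subset _ _).trans (subset_union_left.trans (subset_insert _ _))
  intro p hp q hq
  simp only [coe_filter, coe_sdiff, coe_insert, coe_union, Set.mem_sdiff, Set.mem_insert_iff,
    Set.mem_union, mem_coe, Set.mem_ofPred_eq, not_and] at hp hq
  obtain ⟨rfl | hqA | hqB, hq⟩ := hq
  · exact hp.2.symm
  · by_contra hpq
    -- `v - p - b - q` would be an induced path
    exact hP4 (pathGraph_four_isIndContained_of_adj hp.2 (hAB hp.1 hb) (hAB hqA hb).symm hvb
      (hq hqA) hpq)
  · exact hAB hp.1 hqB

lemma IsJoinOn.insert_or_compl (hP4 : ¬ pathGraph 4 ⊴ H) {s : Finset V} {v : V}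
    (h : H.IsJoinOn s) (hv : v ∉ s) : H.IsJoinOn (insert v s) ∨ Hᶜ.IsJoinOn (insert v s) := by
  obtain ⟨A, B, hA, hB, rfl, hAB⟩ := h
  by_cases hvs : ∃ u ∈ A ∪ B, H.Adj v u
  · obtain ⟨u, hu, hvu⟩ := hvs
    left
    obtain hu | hu := mem_union.1 hu
    · exact isJoinOn_insert_of_adj hP4 hB hAB hv hu hvu
    · rw [union_comm] at hv ⊢
      exact isJoinOn_insert_of_adj hP4 hA hAB.symm hv hu hvu
  · push Not at hvs
    refine Or.inr ⟨{v}, A ∪ B, singleton_nonempty v, hA.mono subset_union_left, by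
      rw [insert_eq], ?_⟩
    intro x hx y hy
    rw [coe_singleton, Set.mem_singleton_iff] at hx
    subst hx
    exact (compl_adj _ _ _).2 ⟨fun h => hv (h ▸ hy), hvs y hy⟩

theorem isJoinOn_or_isJoinOn_compl (hP4 : ¬ pathGraph 4 ⊴ H) {s : Finset V} (hs : 1 < #s) :
    H.IsJoinOn s ∨ Hᶜ.IsJoinOn s := by
  induction s using Finset.induction_on with
  | empty => simp at hs
  | insert v s hv ih =>
    rw [card_insert_of_notMem hv] at hs
    obtain hs | hs := (by omega : #s = 1 ∨ 1 < #s)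
    · obtain ⟨w, rfl⟩ := card_eq_one.1 hs
      have hvw : v ≠ w := fun h => hv (h ▸ mem_singleton_self v)
      rw [insert_eq]
      by_cases hadj : H.Adj v w
      · refine Or.inl ⟨{v}, {w}, singleton_nonempty v, singleton_nonempty w, rfl, ?_⟩
        simpa [IsCompleteBetween] using hadj
      · refine Or.inr ⟨{v}, {w}, singleton_nonempty v, singleton_nonempty w, rfl, ?_⟩
        simpa [IsCompleteBetween] using ⟨hvw, hadj⟩
    · obtain h | h := ih hs
      · exact h.insert_or_compl hP4 hv
      · simpa [or_comm] using
          h.insert_or_compl (pathGraph_four_isIndContained_compl_iff.not.2 hP4) hv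

/-! ### Cographs -/

/-- Vertex sets inducing a cograph, built from single vertices by joins and by disjoint unions
without edges between the parts (which are the joins in `Hᶜ`). -/
inductive IsCographOn (H : SimpleGraph V) : Finset V → Prop
  | empty : H.IsCographOn ∅
  | singleton (v : V) : H.IsCographOn {v}
  | join {s t : Finset V} : H.IsCographOn s → H.IsCographOn t → H.IsCompleteBetween ↑s ↑t →
      H.IsCographOn (s ∪ t)
  | union {s t : Finset V} : H.IsCographOn s → H.IsCographOn t → Hᶜ.IsCompleteBetween ↑s ↑t →
      H.IsCographOn (s ∪ t)

lemma IsCompleteBetween.ssubset_union_left {K : SimpleGraph V} {s₁ s₂ : Finset V}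
    (h : K.IsCompleteBetween ↑s₁ ↑s₂) (h₂ : s₂.Nonempty) : s₁ ⊂ s₁ ∪ s₂ := by
  obtain ⟨x, hx⟩ := h₂
  exact (ssubset_iff_of_subset subset_union_left).2
    ⟨x, mem_union_right _ hx, fun hx' => K.irrefl (h hx' hx)⟩

theorem isCographOn_of_not_isIndContained (hP4 : ¬ pathGraph 4 ⊴ H) (s : Finset V) :
    H.IsCographOn s := by
  induction s using Finset.strongInduction with
  | H s ih =>
  by_cases hs : 1 < #s
  · have hss {K : SimpleGraph V} {s₁ s₂ : Finset V} (h₁ : s₁.Nonempty) (h₂ : s₂.Nonempty)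
        (h : K.IsCompleteBetween ↑s₁ ↑s₂) : s₁ ⊂ s₁ ∪ s₂ ∧ s₂ ⊂ s₁ ∪ s₂ :=
      ⟨h.ssubset_union_left h₂, union_comm s₂ s₁ ▸ h.symm.ssubset_union_left h₁⟩
    obtain ⟨s₁, s₂, h₁, h₂, rfl, h₁₂⟩ | ⟨s₁, s₂, h₁, h₂, rfl, h₁₂⟩ :=
      isJoinOn_or_isJoinOn_compl hP4 hs
    · exact .join (ih _ (hss h₁ h₂ h₁₂).1) (ih _ (hss h₁ h₂ h₁₂).2) h₁₂
    · exact .union (ih _ (hss h₁ h₂ h₁₂).1) (ih _ (hss h₁ h₂ h₁₂).2) h₁₂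
  · obtain h | h := (by omega : #s = 0 ∨ #s = 1)
    · rw [card_eq_zero.1 h]; exact .empty
    · obtain ⟨v, rfl⟩ := card_eq_one.1 h; exact .singleton v

theorem IsCographOn.subset {s t : Finset V} (h : H.IsCographOn s) (hts : t ⊆ s) :
    H.IsCographOn t := by
  induction h generalizing t with
  | empty => rw [subset_empty.1 hts]; exact .empty
  | singleton v =>
    obtain rfl | rfl := subset_singleton_iff.1 hts
    exacts [.empty, .singleton v]
  | @join s₁ s₂ _ _ h₁₂ ih₁ ih₂ =>
    rw [← inter_eq_left.2 hts, inter_union_distrib_left]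
    exact .join (ih₁ inter_subset_right) (ih₂ inter_subset_right)
      fun x hx y hy => h₁₂ (mem_of_mem_inter_right hx) (mem_of_mem_inter_right hy)
  | @union s₁ s₂ _ _ h₁₂ ih₁ ih₂ =>
    rw [← inter_eq_left.2 hts, inter_union_distrib_left]
    exact .union (ih₁ inter_subset_right) (ih₂ inter_subset_right)
      fun x hx y hy => h₁₂ (mem_of_mem_inter_right hx) (mem_of_mem_inter_right hy)

/-! ### Independence numbers of induced subgraphs -/

lemma _root_.bddAbove_setOf_card {α : Type*} [Finite α] (P : Finset α → Prop) :
    BddAbove {k | ∃ A, P A ∧ #A = k} :=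
  ((Set.finite_range (card : Finset α → ℕ)).subset
    (by rintro _ ⟨A, -, rfl⟩; exact ⟨A, rfl⟩)).bddAbove

lemma IsIndepSet.card_le_indepNumber_induce {A s : Finset V} (hA : H.IsIndepSet ↑A)
    (hAs : A ⊆ s) : #A ≤ indepNumber (H.induce ↑s) := by
  refine le_csSup (bddAbove_setOf_card _) ⟨A.subtype (· ∈ s), ?_, ?_⟩
  · intro x hx y hy hxy
    exact hA (by simpa using hx) (by simpa using hy) (Subtype.val_injective.ne hxy)
  · rw [card_subtype, filter_true_of_mem hAs]

lemma exists_isIndepSet_card_eq_indepNumber_induce (s : Finset V) :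
    ∃ A ⊆ s, H.IsIndepSet ↑A ∧ #A = indepNumber (H.induce ↑s) := by
  have hmem : indepNumber (H.induce ↑s) ∈ {k | ∃ B : Finset (↑s : Set V),
      (H.induce ↑s).IsIndepSet ↑B ∧ #B = k} :=
    Nat.sSup_mem ⟨0, ∅, by simp, rfl⟩ (bddAbove_setOf_card _)
  obtain ⟨B, hB, hcard⟩ := hmem
  refine ⟨B.map (Function.Embedding.subtype _), ?_, ?_, by rw [card_map, hcard]⟩
  · intro x hx
    obtain ⟨y, -, rfl⟩ := mem_map.1 hx
    exact y.2
  · rintro _ hx _ hy hxy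
    simp only [coe_map, Set.mem_image, mem_coe] at hx hy
    obtain ⟨x, hx, rfl⟩ := hx
    obtain ⟨y, hy, rfl⟩ := hy
    exact hB hx hy (ne_of_apply_ne _ hxy)

lemma indepNumber_induce_mono {s t : Finset V} (hst : s ⊆ t) :
    indepNumber (H.induce ↑s) ≤ indepNumber (H.induce ↑t) := by
  obtain ⟨A, hAs, hA, hcard⟩ := exists_isIndepSet_card_eq_indepNumber_induce (H := H) s
  exact hcard ▸ hA.card_le_indepNumber_induce (hAs.trans hst)

lemma indepNumber_induce_le_card (s : Finset V) : indepNumber (H.induce ↑s) ≤ #s := by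
  obtain ⟨A, hAs, -, hcard⟩ := exists_isIndepSet_card_eq_indepNumber_induce (H := H) s
  exact hcard ▸ card_le_card hAs

lemma indepNumber_induce_add_le {s t : Finset V} (hst : Hᶜ.IsCompleteBetween ↑s ↑t) :
    indepNumber (H.induce ↑s) + indepNumber (H.induce ↑t) ≤ indepNumber (H.induce ↑(s ∪ t)) := by
  obtain ⟨A, hAs, hA, hAcard⟩ := exists_isIndepSet_card_eq_indepNumber_induce (H := H) s
  obtain ⟨B, hBt, hB, hBcard⟩ := exists_isIndepSet_card_eq_indepNumber_induce (H := H) t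
  rw [← hAcard, ← hBcard]
  have hAB : Hᶜ.IsCompleteBetween ↑A ↑B := fun x hx y hy => hst (hAs hx) (hBt hy)
  rw [← card_union_of_disjoint (disjoint_coe.1 hAB.disjoint)]
  refine IsIndepSet.card_le_indepNumber_induce ?_ (union_subset_union hAs hBt)
  have : Std.Symm fun v w => ¬ H.Adj v w := ⟨fun _ _ h h' => h h'.symm⟩
  rw [coe_union, IsIndepSet, Set.pairwise_union_of_symm]
  exact ⟨hA, hB, fun x hx y hy _ => ((compl_adj _ _ _).1 (hAB hx hy)).2⟩

/-- Cographs are perfect: `H[s]` can be covered by `α(H[s])` cliques, the colour classes of `f`. -/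
theorem IsCographOn.exists_cliqueCover {s : Finset V} (h : H.IsCographOn s) :
    ∃ f : V → ℕ, (∀ x ∈ s, f x < indepNumber (H.induce ↑s)) ∧
      ∀ x ∈ s, ∀ y ∈ s, x ≠ y → f x = f y → H.Adj x y := by
  induction h with
  | empty => exact ⟨0, by simp, by simp⟩
  | singleton v =>
    refine ⟨0, fun x _ => ?_, by simp⟩
    exact zero_lt_one.trans_le
      (by simpa using IsIndepSet.card_le_indepNumber_induce (H := H) (by simp) (subset_refl {v}))
  | @join s₁ s₂ _ _ h₁₂ ih₁ ih₂ =>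
    obtain ⟨f₁, hf₁, hc₁⟩ := ih₁
    obtain ⟨f₂, hf₂, hc₂⟩ := ih₂
    refine ⟨fun x => if x ∈ s₁ then f₁ x else f₂ x, fun x hx => ?_, fun x hx y hy hxy hf => ?_⟩
    · have := max_le (indepNumber_induce_mono (H := H) (subset_union_left (s₂ := s₂)))
        (indepNumber_induce_mono (H := H) (subset_union_right (s₁ := s₁)))
      dsimp only
      split_ifs with hx₁
      · exact (hf₁ x hx₁).trans_le ((le_max_left _ _).trans this)
      · exact (hf₂ x ((mem_union.1 hx).resolve_left hx₁)).trans_le ((le_max_right _ _).trans this)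
    · have hy₂ (hy₁ : y ∉ s₁) : y ∈ s₂ := (mem_union.1 hy).resolve_left hy₁
      by_cases hx₁ : x ∈ s₁ <;> by_cases hy₁ : y ∈ s₁ <;> simp only [hx₁, hy₁, if_true, if_false] at hf
      · exact hc₁ x hx₁ y hy₁ hxy hf
      · exact h₁₂ hx₁ (hy₂ hy₁)
      · exact (h₁₂ hy₁ ((mem_union.1 hx).resolve_left hx₁)).symm
      · exact hc₂ x ((mem_union.1 hx).resolve_left hx₁) y (hy₂ hy₁) hxy hf
  | @union s₁ s₂ _ _ h₁₂ ih₁ ih₂ =>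
    obtain ⟨f₁, hf₁, hc₁⟩ := ih₁
    obtain ⟨f₂, hf₂, hc₂⟩ := ih₂
    refine ⟨fun x => if x ∈ s₁ then f₁ x else indepNumber (H.induce ↑s₁) + f₂ x,
      fun x hx => ?_, fun x hx y hy hxy hf => ?_⟩
    · have := indepNumber_induce_add_le h₁₂
      dsimp only
      split_ifs with hx₁
      · have := hf₁ x hx₁; omega
      · have := hf₂ x ((mem_union.1 hx).resolve_left hx₁); omega
    · have hy₂ (hy₁ : y ∉ s₁) : y ∈ s₂ := (mem_union.1 hy).resolve_left hy₁
      by_cases hx₁ : x ∈ s₁ <;> by_cases hy₁ : y ∈ s₁ <;> simp only [hx₁, hy₁, if_true, if_false] at hf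
      · exact hc₁ x hx₁ y hy₁ hxy hf
      · have := hf₁ x hx₁; omega
      · have := hf₁ y hy₁; omega
      · exact hc₂ x ((mem_union.1 hx).resolve_left hx₁) y (hy₂ hy₁) hxy (by omega)

/-- An independent set of the strong product `H[X] ⊠ H[Y]` has at most `α(H[X]) α(H[Y])` elements
when `X` induces a cograph. -/
theorem IsCographOn.card_le_mul {P : Finset (V × V)} (hX : H.IsCographOn X)
    (hPX : ∀ p ∈ P, p.1 ∈ X) (hPY : ∀ p ∈ P, p.2 ∈ Y)
    (hP : ∀ p ∈ P, ∀ q ∈ P, (p.1 ≠ q.1 → H.Adj p.1 q.1) → (p.2 ≠ q.2 → H.Adj p.2 q.2) → p = q) :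
    #P ≤ indepNumber (H.induce ↑X) * indepNumber (H.induce ↑Y) := by
  obtain ⟨f, hf, hfc⟩ := hX.exists_cliqueCover
  have hfiber : ∀ i ∈ range (indepNumber (H.induce ↑X)),
      #{p ∈ P | f p.1 = i} ≤ indepNumber (H.induce ↑Y) := by
    intro i _
    have hclose : ∀ p ∈ {p ∈ P | f p.1 = i}, ∀ q ∈ {p ∈ P | f p.1 = i},
        p.1 ≠ q.1 → H.Adj p.1 q.1 := by
      intro p hp q hq hne
      rw [mem_filter] at hp hq
      exact hfc _ (hPX p hp.1) _ (hPX q hq.1) hne (hp.2.trans hq.2.symm)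
    have hinj : Set.InjOn Prod.snd ↑{p ∈ P | f p.1 = i} := fun p hp q hq h =>
      hP p (mem_filter.1 hp).1 q (mem_filter.1 hq).1 (hclose p hp q hq) fun hne => absurd h hne
    rw [← card_image_of_injOn hinj]
    refine IsIndepSet.card_le_indepNumber_induce ?_ fun y hy => ?_
    · rintro _ hp' _ hq' hne hadj
      obtain ⟨p, hp, rfl⟩ := mem_image.1 hp'
      obtain ⟨q, hq, rfl⟩ := mem_image.1 hq'
      exact hne (congrArg Prod.snd
        (hP p (mem_filter.1 hp).1 q (mem_filter.1 hq).1 (hclose p hp q hq) fun _ => hadj))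
    · obtain ⟨p, hp, rfl⟩ := mem_image.1 hy
      exact hPY p (mem_filter.1 hp).1
  calc #P ≤ indepNumber (H.induce ↑Y) * #(range (indepNumber (H.induce ↑X))) :=
        card_le_mul_card_image_of_maps_to (fun p hp => mem_range.2 (hf _ (hPX p hp))) _ hfiber
    _ = _ := by rw [card_range, mul_comm]

lemma _root_.EdgeIndep.adj (hM : EdgeIndep H ↑M) {a b : V} (h : s(a, b) ∈ M) : H.Adj a b :=
  hM.1 h

lemma _root_.EdgeIndep.mono {N : Finset (Sym2 V)} (hM : EdgeIndep H ↑M) (hNM : N ⊆ M) :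
    EdgeIndep H ↑N :=
  ⟨(coe_subset.2 hNM).trans hM.1, hM.2.mono (coe_subset.2 hNM)⟩

lemma _root_.EdgeIndep.eq_of_adj (hM : EdgeIndep H ↑M) {a b c d : V} (he : s(a, b) ∈ M)
    (hf : s(c, d) ∈ M) (hac : a ≠ c → H.Adj a c) (had : a ≠ d → H.Adj a d)
    (hbc : b ≠ c → H.Adj b c) (hbd : b ≠ d → H.Adj b d) : s(a, b) = s(c, d) := by
  by_contra hne
  refine hM.2 he hf hne ?_
  have hab := hM.adj he
  have hcd := hM.adj hf
  intro x hx y hy hxy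
  simp only [Set.mem_ofPred_eq, Sym2.mem_iff] at hx hy
  rcases hx with (rfl | rfl) | (rfl | rfl) <;> rcases hy with (rfl | rfl) | (rfl | rfl) <;>
    simp_all [adj_comm, eq_comm]

lemma _root_.EdgeIndep.not_isCompleteBetween (hM : EdgeIndep H ↑M) {a b c d : V}
    (hab : s(a, b) ∈ M) (hcd : s(c, d) ∈ M) (ha : a ∈ X) (hb : b ∈ X) (hc : c ∈ Y) (hd : d ∈ Y) :
    ¬ H.IsCompleteBetween ↑X ↑Y := by
  intro hXY
  have h := hM.eq_of_adj hab hcd (fun _ => hXY ha hc) (fun _ => hXY ha hd) (fun _ => hXY hb hc)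
    (fun _ => hXY hb hd)
  rcases Sym2.mem_iff.1 (h ▸ Sym2.mem_mk_left a b) with rfl | rfl
  exacts [H.irrefl (hXY ha hc), H.irrefl (hXY ha hd)]

noncomputable def crossPairs (M : Finset (Sym2 V)) (X Y : Finset V) : Finset (V × V) :=
  {p ∈ X ×ˢ Y | s(p.1, p.2) ∈ M}

noncomputable def crossEnds (M : Finset (Sym2 V)) (X Y : Finset V) : Finset V :=
  {x ∈ X | ∃ y ∈ Y, s(x, y) ∈ M}

lemma mk_mem_image_crossPairs {x y : V} (hx : x ∈ X) (hy : y ∈ Y) (he : s(x, y) ∈ M) :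
    s(x, y) ∈ (crossPairs M X Y).image fun p => s(p.1, p.2) :=
  mem_image.2 ⟨(x, y), mem_filter.2 ⟨mem_product.2 ⟨hx, hy⟩, he⟩, rfl⟩

lemma _root_.EdgeIndep.eq_of_mem_crossPairs (hM : EdgeIndep H ↑M)
    (hXY : H.IsCompleteBetween ↑X ↑Y) {p q : V × V} (hp : p ∈ crossPairs M X Y)
    (hq : q ∈ crossPairs M X Y) (h₁ : p.1 ≠ q.1 → H.Adj p.1 q.1)
    (h₂ : p.2 ≠ q.2 → H.Adj p.2 q.2) : p = q := by
  simp only [crossPairs, mem_filter, mem_product] at hp hq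
  rcases Sym2.eq_iff.1 (hM.eq_of_adj hp.2 hq.2 h₁ (fun _ => hXY hp.1.1 hq.1.2)
    (fun _ => (hXY hq.1.1 hp.1.2).symm) h₂) with ⟨h, h'⟩ | ⟨h, -⟩
  · exact Prod.ext h h'
  · exact (H.irrefl (hXY hp.1.1 (h ▸ hq.1.2))).elim

theorem IsCographOn.card_crossPairs_le (hX : H.IsCographOn X) (hXY : H.IsCompleteBetween ↑X ↑Y)
    (hM : EdgeIndep H ↑M) :
    #(crossPairs M X Y) ≤
      indepNumber (H.induce ↑(crossEnds M X Y)) * indepNumber (H.induce ↑(crossEnds M Y X)) := by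
  refine (hX.subset (filter_subset _ _)).card_le_mul (fun p hp => ?_) (fun p hp => ?_)
    fun p hp q hq => hM.eq_of_mem_crossPairs hXY hp hq
  all_goals simp only [crossPairs, crossEnds, mem_filter, mem_product] at hp ⊢
  · exact ⟨hp.1.1, p.2, hp.1.2, hp.2⟩
  · exact ⟨hp.1.2, p.1, hp.1.1, Sym2.eq_swap ▸ hp.2⟩

/-- Edges of `M` leaving `X` towards two different parts have unrelated endpoints in `X`. -/
lemma _root_.EdgeIndep.indepNumber_crossEnds_add_le (hM : EdgeIndep H ↑M)
    (hXY : H.IsCompleteBetween ↑X ↑Y) (hXZ : H.IsCompleteBetween ↑X ↑Z)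
    (hYZ : H.IsCompleteBetween ↑Y ↑Z) :
    indepNumber (H.induce ↑(crossEnds M X Y)) + indepNumber (H.induce ↑(crossEnds M X Z)) ≤
      indepNumber (H.induce ↑X) := by
  refine (indepNumber_induce_add_le fun x hx x' hx' => ?_).trans
    (indepNumber_induce_mono (union_subset (filter_subset _ _) (filter_subset _ _)))
  simp only [crossEnds, coe_filter, Set.mem_ofPred_eq] at hx hx'
  obtain ⟨hx, y, hy, hxy⟩ := hx
  obtain ⟨hx', z, hz, hxz⟩ := hx'
  rw [compl_adj]
  by_contra hclose
  have h := hM.eq_of_adj hxy hxz (not_and_not_right.1 hclose) (fun _ => hXZ hx hz)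
    (fun _ => (hXY hx' hy).symm) (fun _ => hYZ hy hz)
  rcases Sym2.mem_iff.1 (h ▸ Sym2.mem_mk_right x y) with rfl | rfl
  exacts [H.irrefl (hXY hx' hy), H.irrefl (hYZ hy hz)]

lemma _root_.mul_add_mul_add_mul_le_max {u v β₁ β₂ τ₁ τ₂ a₁ a₂ w : ℕ} (h₁ : u + β₁ ≤ a₁)
    (h₂ : v + β₂ ≤ a₂) (h₃ : τ₁ + τ₂ ≤ w) :
    β₁ * β₂ + u * τ₁ + v * τ₂ ≤ max (a₁ * max a₂ w) (a₂ * max a₁ w) := by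
  rcases le_total v u with h | h
  · refine le_trans ?_ (le_max_left _ _)
    calc β₁ * β₂ + u * τ₁ + v * τ₂ ≤ β₁ * max a₂ w + u * max a₂ w := by
          have : β₂ ≤ max a₂ w := le_max_of_le_left (by omega)
          have : τ₁ + τ₂ ≤ max a₂ w := le_max_of_le_right h₃
          nlinarith
      _ ≤ a₁ * max a₂ w := by rw [← add_mul]; exact Nat.mul_le_mul_right _ (by omega)
  · refine le_trans ?_ (le_max_right _ _)
    calc β₁ * β₂ + u * τ₁ + v * τ₂ ≤ β₂ * max a₁ w + v * max a₁ w := by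
          have : β₁ ≤ max a₁ w := le_max_of_le_left (by omega)
          have : τ₁ + τ₂ ≤ max a₁ w := le_max_of_le_right h₃
          nlinarith
      _ ≤ a₂ * max a₁ w := by rw [← add_mul]; exact Nat.mul_le_mul_right _ (by omega)

lemma isCompleteBetween_union_right {K : SimpleGraph V} {s t₁ t₂ : Finset V}
    (h₁ : K.IsCompleteBetween ↑s ↑t₁) (h₂ : K.IsCompleteBetween ↑s ↑t₂) :
    K.IsCompleteBetween ↑s ↑(t₁ ∪ t₂) := fun x hx y hy => by
  rcases mem_union.1 hy with hy | hy
  exacts [h₁ hx hy, h₂ hx hy]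

theorem card_le_max_of_isCompleteBetween {s₁ s₂ t : Finset V}
    (hc₁ : H.IsCographOn s₁) (hc₂ : H.IsCographOn s₂) (h₁₂ : H.IsCompleteBetween ↑s₁ ↑s₂)
    (h₁t : H.IsCompleteBetween ↑s₁ ↑t) (h₂t : H.IsCompleteBetween ↑s₂ ↑t)
    (hM : EdgeIndep H ↑M)
    (hMs : M ⊆ (crossPairs M s₁ s₂).image (fun p => s(p.1, p.2)) ∪
      (crossPairs M s₁ t).image (fun p => s(p.1, p.2)) ∪
      (crossPairs M s₂ t).image (fun p => s(p.1, p.2))) :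
    #M ≤ max (indepNumber (H.induce ↑s₁) *
        max (indepNumber (H.induce ↑s₂)) (indepNumber (H.induce ↑t)))
      (indepNumber (H.induce ↑s₂) *
        max (indepNumber (H.induce ↑s₁)) (indepNumber (H.induce ↑t))) := by
  calc #M ≤ #(crossPairs M s₁ s₂) + #(crossPairs M s₁ t) + #(crossPairs M s₂ t) :=
        (card_le_card hMs).trans <| (card_union_le _ _).trans <|
          add_le_add ((card_union_le _ _).trans (add_le_add card_image_le card_image_le))
            card_image_le
    _ ≤ _ := add_le_add (add_le_add (hc₁.card_crossPairs_le h₁₂ hM)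
          (hc₁.card_crossPairs_le h₁t hM)) (hc₂.card_crossPairs_le h₂t hM)
    _ ≤ _ := mul_add_mul_add_mul_le_max (hM.indepNumber_crossEnds_add_le h₁t h₁₂ h₂t.symm)
          (hM.indepNumber_crossEnds_add_le h₂t h₁₂.symm h₁t.symm)
          (hM.indepNumber_crossEnds_add_le h₁t.symm h₂t.symm h₁₂)

/-- The invariant of the induction along the cotree: an independent edge set whose edges meet `s`
and stay inside `s ∪ t`, for any `t` completely joined to `s`, is no larger than a star packing
centred at an independent subset of `s`. -/
def HasStarBound (H : SimpleGraph V) (s : Finset V) : Prop :=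
  ∀ (t : Finset V) (M : Finset (Sym2 V)), H.IsCompleteBetween ↑s ↑t → EdgeIndep H ↑M →
    (∀ e ∈ M, ∃ x ∈ s, ∃ y ∈ s ∪ t, e = s(x, y)) →
    ∃ A ⊆ s, H.IsIndepSet ↑A ∧ #M ≤ ∑ x ∈ A, indepNumber (H.induce ↑{y ∈ s ∪ t | H.Adj x y})

lemma exists_mul_le_sum_of_isCompleteBetween {u : Finset V}
    (hXY : H.IsCompleteBetween ↑X ↑Y) (hYu : Y ⊆ u) :
    ∃ A ⊆ X, H.IsIndepSet ↑A ∧ indepNumber (H.induce ↑X) * indepNumber (H.induce ↑Y) ≤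
      ∑ x ∈ A, indepNumber (H.induce ↑{y ∈ u | H.Adj x y}) := by
  obtain ⟨A, hAX, hA, hcard⟩ := exists_isIndepSet_card_eq_indepNumber_induce (H := H) X
  refine ⟨A, hAX, hA, ?_⟩
  rw [← hcard, ← smul_eq_mul]
  exact card_nsmul_le_sum _ _ _ fun x hx =>
    indepNumber_induce_mono fun y hy => mem_filter.2 ⟨hYu hy, hXY (hAX hx) hy⟩

lemma hasStarBound_empty : H.HasStarBound ∅ := by
  intro t M _ _ hMs
  refine ⟨∅, subset_refl _, by simp, ?_⟩
  have : M = ∅ := eq_empty_of_forall_notMem fun e he => by simpa using hMs e he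
  simp [this]

lemma hasStarBound_singleton (v : V) : H.HasStarBound {v} := by
  intro t M hst hM hMs
  refine ⟨{v}, subset_refl _, by simp, ?_⟩
  have hsub : M ⊆ (crossPairs M {v} t).image fun p => s(p.1, p.2) := by
    intro e he
    obtain ⟨x, hx, y, hy, rfl⟩ := hMs e he
    rw [mem_singleton] at hx
    subst hx
    have hy : y ∈ t := by
      simpa [(hM.adj he).ne'] using hy
    exact mk_mem_image_crossPairs (mem_singleton_self x) hy he
  calc #M ≤ #(crossPairs M {v} t) := (card_le_card hsub).trans card_image_le
    _ ≤ indepNumber (H.induce ↑(crossEnds M {v} t)) *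
          indepNumber (H.induce ↑(crossEnds M t {v})) :=
        (IsCographOn.singleton v).card_crossPairs_le hst hM
    _ ≤ 1 * indepNumber (H.induce ↑t) := by
        refine Nat.mul_le_mul ((indepNumber_induce_le_card _).trans ?_)
          (indepNumber_induce_mono (filter_subset _ _))
        exact (card_le_card (filter_subset _ _)).trans (card_singleton v).le
    _ ≤ ∑ x ∈ {v}, indepNumber (H.induce ↑{y ∈ {v} ∪ t | H.Adj x y}) := by
        rw [one_mul, sum_singleton]
        exact indepNumber_induce_mono fun y hy =>
          mem_filter.2 ⟨mem_union_right _ hy, hst (mem_singleton_self v) hy⟩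

theorem HasStarBound.union {s₁ s₂ : Finset V} (h₁ : H.HasStarBound s₁) (h₂ : H.HasStarBound s₂)
    (h₁₂ : Hᶜ.IsCompleteBetween ↑s₁ ↑s₂) : H.HasStarBound (s₁ ∪ s₂) := by
  intro t M hst hM hMs
  obtain ⟨A₁, hA₁, hA₁i, hM₁⟩ := h₁ t {e ∈ M | ∃ x ∈ s₁, ∃ y ∈ s₁ ∪ t, e = s(x, y)}
    (fun x hx y hy => hst (mem_union_left _ hx) hy) (hM.mono (filter_subset _ _))
    fun e he => (mem_filter.1 he).2
  obtain ⟨A₂, hA₂, hA₂i, hM₂⟩ := h₂ t {e ∈ M | ∃ x ∈ s₂, ∃ y ∈ s₂ ∪ t, e = s(x, y)}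
    (fun x hx y hy => hst (mem_union_right _ hx) hy) (hM.mono (filter_subset _ _))
    fun e he => (mem_filter.1 he).2
  have hMsub : M ⊆ {e ∈ M | ∃ x ∈ s₁, ∃ y ∈ s₁ ∪ t, e = s(x, y)} ∪
      {e ∈ M | ∃ x ∈ s₂, ∃ y ∈ s₂ ∪ t, e = s(x, y)} := by
    intro e he
    obtain ⟨x, hx, y, hy, rfl⟩ := hMs e he
    have hxy := hM.adj he
    simp only [mem_union, mem_filter] at hx hy ⊢
    rcases hx with hx | hx <;> rcases hy with (hy | hy) | hy
    · exact Or.inl ⟨he, x, hx, y, Or.inl hy, rfl⟩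
    · exact absurd hxy ((compl_adj _ _ _).1 (h₁₂ hx hy)).2
    · exact Or.inl ⟨he, x, hx, y, Or.inr hy, rfl⟩
    · exact absurd hxy.symm ((compl_adj _ _ _).1 (h₁₂ hy hx)).2
    · exact Or.inr ⟨he, x, hx, y, Or.inl hy, rfl⟩
    · exact Or.inr ⟨he, x, hx, y, Or.inr hy, rfl⟩
  have hmono {s : Finset V} (hs : s ⊆ s₁ ∪ s₂) (x : V) :
      indepNumber (H.induce ↑{y ∈ s ∪ t | H.Adj x y}) ≤
        indepNumber (H.induce ↑{y ∈ s₁ ∪ s₂ ∪ t | H.Adj x y}) :=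
    indepNumber_induce_mono (filter_subset_filter _ (union_subset_union hs subset_rfl))
  have hA : Disjoint A₁ A₂ := disjoint_of_subset_left hA₁ <| disjoint_of_subset_right hA₂ <|
    disjoint_coe.1 h₁₂.disjoint
  refine ⟨A₁ ∪ A₂, union_subset_union hA₁ hA₂, ?_, ?_⟩
  · have : Std.Symm fun v w => ¬ H.Adj v w := ⟨fun _ _ h h' => h h'.symm⟩
    rw [coe_union, IsIndepSet, Set.pairwise_union_of_symm]
    exact ⟨hA₁i, hA₂i, fun x hx y hy _ => ((compl_adj _ _ _).1 (h₁₂ (hA₁ hx) (hA₂ hy))).2⟩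
  calc #M ≤ _ := (card_le_card hMsub).trans (card_union_le _ _)
    _ ≤ _ := add_le_add (hM₁.trans (sum_le_sum fun x _ => hmono subset_union_left x))
        (hM₂.trans (sum_le_sum fun x _ => hmono subset_union_right x))
    _ = _ := (sum_union hA).symm

lemma exists_mk_mem_of_not_forall_mem {s₁ s₂ t : Finset V}
    (hMs : ∀ e ∈ M, ∃ x ∈ s₁ ∪ s₂, ∃ y ∈ s₁ ∪ s₂ ∪ t, e = s(x, y))
    (h : ¬ ∀ e ∈ M, ∃ x ∈ s₁, ∃ y ∈ s₁ ∪ (s₂ ∪ t), e = s(x, y)) :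
    ∃ x ∈ s₂ ∪ t, ∃ y ∈ s₂ ∪ t, s(x, y) ∈ M := by
  push Not at h
  obtain ⟨e, he, hne⟩ := h
  obtain ⟨x, hx, y, hy, rfl⟩ := hMs e he
  have hx₁ : x ∉ s₁ := fun hx₁ => hne x hx₁ y (by rwa [← union_assoc]) rfl
  have hy₁ : y ∉ s₁ := fun hy₁ => hne y hy₁ x (by simp_all) Sym2.eq_swap
  simp only [mem_union] at hx hy
  exact ⟨x, by simp [hx.resolve_left hx₁], y, by simp_all, he⟩

/-- Once `M` has an edge inside `s₂ ∪ t` and one inside `s₁ ∪ t`, it has no edge inside `s₁` or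
inside `s₂`, as such an edge would span a clique with one of those two. -/
lemma _root_.EdgeIndep.subset_image_crossPairs (hM : EdgeIndep H ↑M) {s₁ s₂ t : Finset V}
    (h₁ : H.IsCompleteBetween ↑s₁ ↑(s₂ ∪ t)) (h₂ : H.IsCompleteBetween ↑s₂ ↑(s₁ ∪ t))
    (hMs : ∀ e ∈ M, ∃ x ∈ s₁ ∪ s₂, ∃ y ∈ s₁ ∪ s₂ ∪ t, e = s(x, y)) {x₁ y₁ x₂ y₂ : V}
    (he₁ : s(x₁, y₁) ∈ M) (hx₁ : x₁ ∈ s₂ ∪ t) (hy₁ : y₁ ∈ s₂ ∪ t)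
    (he₂ : s(x₂, y₂) ∈ M) (hx₂ : x₂ ∈ s₁ ∪ t) (hy₂ : y₂ ∈ s₁ ∪ t) :
    M ⊆ (crossPairs M s₁ s₂).image (fun p => s(p.1, p.2)) ∪
      (crossPairs M s₁ t).image (fun p => s(p.1, p.2)) ∪
      (crossPairs M s₂ t).image (fun p => s(p.1, p.2)) := by
  intro e he
  obtain ⟨x, hx, y, hy, rfl⟩ := hMs e he
  simp only [mem_union] at hx hy ⊢
  rcases hx with hx | hx <;> rcases hy with (hy | hy) | hy
  · exact (hM.not_isCompleteBetween he he₁ hx hy hx₁ hy₁ h₁).elim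
  · exact Or.inl (Or.inl (mk_mem_image_crossPairs hx hy he))
  · exact Or.inl (Or.inr (mk_mem_image_crossPairs hx hy he))
  · exact Or.inl (Or.inl (Sym2.eq_swap ▸ mk_mem_image_crossPairs hy hx (Sym2.eq_swap ▸ he)))
  · exact (hM.not_isCompleteBetween he he₂ hx hy hx₂ hy₂ h₂).elim
  · exact Or.inr (mk_mem_image_crossPairs hx hy he)

theorem HasStarBound.join {s₁ s₂ : Finset V} (h₁ : H.HasStarBound s₁) (h₂ : H.HasStarBound s₂)
    (hc₁ : H.IsCographOn s₁) (hc₂ : H.IsCographOn s₂) (h₁₂ : H.IsCompleteBetween ↑s₁ ↑s₂) :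
    H.HasStarBound (s₁ ∪ s₂) := by
  intro t M hst hM hMs
  have h₁t : H.IsCompleteBetween ↑s₁ ↑t := fun x hx y hy => hst (mem_union_left _ hx) hy
  have h₂t : H.IsCompleteBetween ↑s₂ ↑t := fun x hx y hy => hst (mem_union_right _ hx) hy
  by_cases hM₁ : ∀ e ∈ M, ∃ x ∈ s₁, ∃ y ∈ s₁ ∪ (s₂ ∪ t), e = s(x, y)
  · obtain ⟨A, hA, hAi, hcard⟩ := h₁ _ M (isCompleteBetween_union_right h₁₂ h₁t) hM hM₁
    exact ⟨A, hA.trans subset_union_left, hAi, by rwa [← union_assoc] at hcard⟩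
  by_cases hM₂ : ∀ e ∈ M, ∃ x ∈ s₂, ∃ y ∈ s₂ ∪ (s₁ ∪ t), e = s(x, y)
  · obtain ⟨A, hA, hAi, hcard⟩ := h₂ _ M (isCompleteBetween_union_right h₁₂.symm h₂t) hM hM₂
    exact ⟨A, hA.trans subset_union_right, hAi, by rwa [← union_assoc, union_comm s₂] at hcard⟩
  obtain ⟨x₁, hx₁, y₁, hy₁, he₁⟩ := exists_mk_mem_of_not_forall_mem hMs hM₁
  obtain ⟨x₂, hx₂, y₂, hy₂, he₂⟩ :=
    exists_mk_mem_of_not_forall_mem (s₁ := s₂) (by rwa [union_comm s₂]) hM₂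
  have hMs' := hM.subset_image_crossPairs (isCompleteBetween_union_right h₁₂ h₁t)
    (isCompleteBetween_union_right h₁₂.symm h₂t) hMs he₁ hx₁ hy₁ he₂ hx₂ hy₂
  have hle (Y : Finset V) :
      max (indepNumber (H.induce ↑Y)) (indepNumber (H.induce ↑t)) ≤
        indepNumber (H.induce ↑(Y ∪ t)) :=
    max_le (indepNumber_induce_mono subset_union_left) (indepNumber_induce_mono subset_union_right)
  rcases le_max_iff.1 (card_le_max_of_isCompleteBetween hc₁ hc₂ h₁₂ h₁t h₂t hM hMs') with h | h
  · obtain ⟨A, hA, hAi, hsum⟩ := exists_mul_le_sum_of_isCompleteBetween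
      (isCompleteBetween_union_right h₁₂ h₁t) (union_subset_union subset_union_right subset_rfl)
    exact ⟨A, hA.trans subset_union_left, hAi,
      h.trans ((Nat.mul_le_mul_left _ (hle s₂)).trans hsum)⟩
  · obtain ⟨A, hA, hAi, hsum⟩ := exists_mul_le_sum_of_isCompleteBetween
      (isCompleteBetween_union_right h₁₂.symm h₂t) (union_subset_union subset_union_left subset_rfl)
    exact ⟨A, hA.trans subset_union_right, hAi,
      h.trans ((Nat.mul_le_mul_left _ (hle s₁)).trans hsum)⟩

theorem IsCographOn.hasStarBound {s : Finset V} (h : H.IsCographOn s) : H.HasStarBound s := by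
  induction h with
  | empty => exact hasStarBound_empty
  | singleton v => exact hasStarBound_singleton v
  | join hc₁ hc₂ h₁₂ ih₁ ih₂ => exact ih₁.join ih₂ hc₁ hc₂ h₁₂
  | union _ _ h₁₂ ih₁ ih₂ => exact ih₁.union ih₂ h₁₂

theorem exists_edgeIndep_card_eq_sum {A : Finset V} (hA : H.IsIndepSet ↑A) (B : V → Finset V)
    (hBA : ∀ x ∈ A, ∀ y ∈ B x, H.Adj x y) (hB : ∀ x ∈ A, H.IsIndepSet ↑(B x)) :
    ∃ M : Finset (Sym2 V), EdgeIndep H ↑M ∧ #M = ∑ x ∈ A, #(B x) := by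
  refine ⟨(A.sigma B).image fun p => s(p.1, p.2), ⟨?_, ?_⟩, ?_⟩
  · intro e he
    obtain ⟨⟨x, y⟩, hp, rfl⟩ := mem_image.1 he
    rw [mem_sigma] at hp
    exact hBA x hp.1 y hp.2
  · intro e he f hf hne hclique
    obtain ⟨⟨x, y⟩, hp, rfl⟩ := mem_image.1 he
    obtain ⟨⟨x', y'⟩, hq, rfl⟩ := mem_image.1 hf
    rw [mem_sigma] at hp hq
    by_cases hxx : x = x'
    · subst hxx
      have hyy : y ≠ y' := fun h => hne (h ▸ rfl)
      exact hB x hp.1 hp.2 hq.2 hyy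
        (hclique (Or.inl (Sym2.mem_mk_right x y)) (Or.inr (Sym2.mem_mk_right x y')) hyy)
    · exact hA hp.1 hq.1 hxx
        (hclique (Or.inl (Sym2.mem_mk_left x y)) (Or.inr (Sym2.mem_mk_left x' y')) hxx)
  · rw [card_image_of_injOn, card_sigma]
    rintro ⟨x, y⟩ hp ⟨x', y'⟩ hq h
    simp only [coe_sigma, Set.mem_sigma_iff, mem_coe] at hp hq
    rcases Sym2.eq_iff.1 h with ⟨rfl, rfl⟩ | ⟨rfl, rfl⟩
    · rfl
    · have hxy := hBA _ hp.1 _ hp.2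
      exact (hA hp.1 hq.1 hxy.ne hxy).elim

end SimpleGraph

/-- For a cograph `G` (no induced `P₄`),
`α'(G) = max { Σ_{x ∈ A} α(G[N(x)]) : A independent in G }`. -/
theorem alphaPrime_cograph {V : Type*} [Fintype V] (G : SimpleGraph V)
    (hcograph : ¬ Nonempty (pathGraph 4 ↪g G)) :
    alphaPrime G =
      sSup {m | ∃ A : Finset V, (↑A : Set V).Pairwise (fun a b => ¬ G.Adj a b) ∧
        ∑ x ∈ A, indepNumber (G.induce (G.neighborSet x)) = m} := by
  have hN (x : V) : G.neighborSet x = ↑({y ∈ univ ∪ ∅ | G.Adj x y} : Finset V) := by ext; simp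
  have hstars : {m | ∃ A : Finset V, (↑A : Set V).Pairwise (fun a b => ¬ G.Adj a b) ∧
      ∑ x ∈ A, indepNumber (G.induce (G.neighborSet x)) = m} ⊆
        {k | ∃ M : Finset (Sym2 V), EdgeIndep G ↑M ∧ #M = k} := by
    rintro _ ⟨A, hA, rfl⟩
    choose B hBN hB hcard using fun x =>
      exists_isIndepSet_card_eq_indepNumber_induce (H := G) {y ∈ univ ∪ ∅ | G.Adj x y}
    obtain ⟨M, hM, hMcard⟩ := exists_edgeIndep_card_eq_sum hA B
      (fun x _ y hy => (mem_filter.1 (hBN x hy)).2) fun x _ => hB x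
    exact ⟨M, hM, hMcard.trans (sum_congr rfl fun x _ => by rw [hcard, hN])⟩
  have hbdd := bddAbove_setOf_card fun M : Finset (Sym2 V) => EdgeIndep G ↑M
  refine le_antisymm (csSup_le ⟨0, ∅, by simp [EdgeIndep], rfl⟩ ?_)
    (csSup_le_csSup hbdd ⟨0, ∅, by simp, by simp⟩ hstars)
  rintro _ ⟨M, hM, rfl⟩
  obtain ⟨A, -, hA, hcard⟩ := (isCographOn_of_not_isIndContained hcograph univ).hasStarBound ∅ M
    (by simp [IsCompleteBetween]) hM fun e _ => Sym2.ind (fun x y => ⟨x, mem_univ x, y, by simp, rfl⟩) e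
  exact hcard.trans (le_csSup (hbdd.mono hstars) ⟨A, hA, sum_congr rfl fun x _ => by rw [hN]⟩)
end

section
/- Let G be a graph with a pendant vertex x whose unique neighbor is y. Then α'(G) = 1 + α'(G − x), where α'(H) is the maximum number of edges of H no two of which lie in a common clique. -/
open SimpleGraph

lemma edgeIndep_empty {V : Type*} (G : SimpleGraph V) :
    EdgeIndep G ↑(∅ : Finset (Sym2 V)) := by
  constructor
  · simp
  · simp

lemma alphaSet_nonempty {V : Type*} (G : SimpleGraph V) :
    {k | ∃ A : Finset (Sym2 V), EdgeIndep G ↑A ∧ A.card = k}.Nonempty :=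
  ⟨0, ∅, edgeIndep_empty G, rfl⟩

lemma alphaSet_bdd {V : Type*} [Finite V] (G : SimpleGraph V) :
    BddAbove {k | ∃ A : Finset (Sym2 V), EdgeIndep G ↑A ∧ A.card = k} := by
  classical
  haveI : Fintype V := Fintype.ofFinite V
  exact ⟨Fintype.card (Sym2 V), by rintro k ⟨A, _, rfl⟩; exact A.card_le_univ⟩

/-- If `x` is a pendant vertex with unique neighbor `y`, then
`α'(G) = 1 + α'(G − x)`. -/
theorem alphaPrime_pendant {V : Type*} [Fintype V] (G : SimpleGraph V)
    (x y : V) (hxy : G.neighborSet x = {y}) :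
    alphaPrime G = 1 + alphaPrime (G.induce {v | v ≠ x}) := by
  classical
  have hadj : G.Adj x y := by
    have hy : y ∈ G.neighborSet x := by rw [hxy]; exact rfl
    exact hy
  have hyx : y ≠ x := fun h => G.irrefl (h ▸ hadj)
  set W : Set V := {v | v ≠ x} with hW
  set H : SimpleGraph W := G.induce {v | v ≠ x} with hH
  set φ : Sym2 W → Sym2 V := Sym2.map (Subtype.val) with hφ
  have hφinj : Function.Injective φ := Sym2.map.injective Subtype.val_injective
  -- a vertex adjacent to x is y
  have hnbr : ∀ z : V, G.Adj x z → z = y := by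
    intro z hz
    have : z ∈ G.neighborSet x := hz
    rw [hxy] at this
    exact this
  -- every edge of G containing x is s(x,y)
  have hpend : ∀ e ∈ G.edgeSet, x ∈ e → e = s(x, y) := by
    intro e he hxe
    induction e with
    | _ a b =>
      rw [SimpleGraph.mem_edgeSet] at he
      rcases Sym2.mem_iff.mp hxe with h | h
      · subst h
        rw [hnbr b he]
      · subst h
        rw [Sym2.eq_swap, hnbr a he.symm]
  -- edges of H map to edges of G, avoiding x
  have hφedge : ∀ e' : Sym2 W, e' ∈ H.edgeSet → φ e' ∈ G.edgeSet := by
    intro e' he'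
    induction e' with
    | _ a b =>
      rw [SimpleGraph.mem_edgeSet] at he'
      rw [hφ, Sym2.map_pair_eq, SimpleGraph.mem_edgeSet]
      exact he'
  have hφnox : ∀ e' : Sym2 W, x ∉ φ e' := by
    intro e' hx
    rw [hφ, Sym2.mem_map] at hx
    obtain ⟨a, _, ha⟩ := hx
    exact a.2 ha
  -- clique transfer: H clique → G clique
  have hcliqueGH : ∀ e' f' : Sym2 W,
      H.IsClique {w | w ∈ e' ∨ w ∈ f'} → G.IsClique {u | u ∈ φ e' ∨ u ∈ φ f'} := by
    intro e' f' hc u1 h1 u2 h2 hne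
    have get : ∀ u : V, (u ∈ φ e' ∨ u ∈ φ f') → ∃ w : W, (w ∈ e' ∨ w ∈ f') ∧ w.val = u := by
      rintro u (h | h) <;> rw [hφ, Sym2.mem_map] at h <;> obtain ⟨w, hw, rfl⟩ := h
      · exact ⟨w, Or.inl hw, rfl⟩
      · exact ⟨w, Or.inr hw, rfl⟩
    obtain ⟨w1, hw1, rfl⟩ := get u1 h1
    obtain ⟨w2, hw2, rfl⟩ := get u2 h2
    have hw12 : w1 ≠ w2 := fun h => hne (congrArg Subtype.val h)
    have := hc hw1 hw2 hw12
    rw [hH] at this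
    simpa using this
  -- clique transfer: G clique → H clique
  have hcliqueHG : ∀ e' f' : Sym2 W,
      G.IsClique {u | u ∈ φ e' ∨ u ∈ φ f'} → H.IsClique {w | w ∈ e' ∨ w ∈ f'} := by
    intro e' f' hc w1 h1 w2 h2 hne
    have m1 : (w1 : V) ∈ {u | u ∈ φ e' ∨ u ∈ φ f'} := by
      rcases h1 with h | h
      · exact Or.inl (Sym2.mem_map.mpr ⟨w1, h, rfl⟩)
      · exact Or.inr (Sym2.mem_map.mpr ⟨w1, h, rfl⟩)
    have m2 : (w2 : V) ∈ {u | u ∈ φ e' ∨ u ∈ φ f'} := by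
      rcases h2 with h | h
      · exact Or.inl (Sym2.mem_map.mpr ⟨w2, h, rfl⟩)
      · exact Or.inr (Sym2.mem_map.mpr ⟨w2, h, rfl⟩)
    have hv : (w1 : V) ≠ (w2 : V) := fun h => hne (Subtype.ext h)
    have := hc m1 m2 hv
    rw [hH]
    simpa using this
  -- the edge s(x,y) is in no common clique with a mapped edge of H
  have hxyclique : ∀ e' : Sym2 W, e' ∈ H.edgeSet →
      ¬ G.IsClique {u | u ∈ s(x, y) ∨ u ∈ φ e'} := by
    intro e' he'
    induction e' with
    | _ a b =>
      intro hc
      rw [SimpleGraph.mem_edgeSet, hH] at he'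
      have hab : G.Adj (a : V) (b : V) := by simpa using he'
      have hmemx : x ∈ {u | u ∈ s(x, y) ∨ u ∈ φ s(a, b)} := Or.inl (Sym2.mem_mk_left x y)
      have key : ∀ w : W, (w : V) ∈ φ s(a, b) → (w : V) = y := by
        intro w hw
        by_contra hwy
        have hmw : (w : V) ∈ {u | u ∈ s(x, y) ∨ u ∈ φ s(a, b)} := Or.inr hw
        have hwx : x ≠ (w : V) := fun h => w.2 h.symm
        have := hc hmemx hmw hwx
        exact hwy (hnbr _ this)
      have ha : (a : V) ∈ φ s(a, b) := by
        rw [hφ, Sym2.map_pair_eq]; exact Sym2.mem_mk_left _ _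
      have hb : (b : V) ∈ φ s(a, b) := by
        rw [hφ, Sym2.map_pair_eq]; exact Sym2.mem_mk_right _ _
      have : (a : V) = (b : V) := (key a ha).trans (key b hb).symm
      exact hab.ne this
  -- the set expressions
  have hsymm : ∀ e f : Sym2 V, {u | u ∈ e ∨ u ∈ f} = {u | u ∈ f ∨ u ∈ e} := by
    intro e f; ext u; exact or_comm
  haveI : Finite W := Subtype.finite
  apply le_antisymm
  · -- α'(G) ≤ 1 + α'(H)
    apply csSup_le (alphaSet_nonempty G)
    rintro k ⟨A, ⟨hAe, hAp⟩, rfl⟩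
    -- remove the edge s(x,y) if present, pull back the rest
    set g : V → W := fun v => if h : v = x then ⟨y, hyx⟩ else ⟨v, h⟩ with hg
    set ρ : Sym2 V → Sym2 W := Sym2.map g with hρ
    have hφρ : ∀ e : Sym2 V, x ∉ e → φ (ρ e) = e := by
      intro e hxe
      induction e with
      | _ a b =>
        have ha : a ≠ x := fun h => hxe (h ▸ Sym2.mem_mk_left a b)
        have hb : b ≠ x := fun h => hxe (h ▸ Sym2.mem_mk_right a b)
        rw [hρ, hφ, Sym2.map_pair_eq, Sym2.map_pair_eq, hg]
        simp [dif_neg ha, dif_neg hb]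
    set B : Finset (Sym2 V) := A.erase s(x, y) with hB
    have hBnox : ∀ e ∈ B, x ∉ e := by
      intro e he hxe
      have h1 := Finset.mem_of_mem_erase he
      have h2 := Finset.ne_of_mem_erase he
      exact h2 (hpend e (hAe h1) hxe)
    have hρedge : ∀ e ∈ B, ρ e ∈ H.edgeSet := by
      intro e he
      induction e with
      | _ a b =>
        have hab : G.Adj a b := hAe (Finset.mem_of_mem_erase he)
        have ha : a ≠ x := fun h => hBnox _ he (h ▸ Sym2.mem_mk_left a b)
        have hb : b ≠ x := fun h => hBnox _ he (h ▸ Sym2.mem_mk_right a b)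
        rw [hρ, Sym2.map_pair_eq, SimpleGraph.mem_edgeSet, hH, hg]
        simp [dif_neg ha, dif_neg hb]
        exact hab
    set B' : Finset (Sym2 W) := B.image ρ with hB'
    have hcardB' : B'.card = B.card := by
      apply Finset.card_image_of_injOn
      intro e he f hf hef
      have : φ (ρ e) = φ (ρ f) := congrArg φ hef
      rwa [hφρ e (hBnox e he), hφρ f (hBnox f hf)] at this
    have hB'indep : EdgeIndep H ↑B' := by
      constructor
      · intro e' he'
        rw [Finset.mem_coe, hB', Finset.mem_image] at he'
        obtain ⟨e, he, rfl⟩ := he'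
        exact hρedge e he
      · intro e' he' f' hf' hne hc
        rw [Finset.mem_coe, hB', Finset.mem_image] at he' hf'
        obtain ⟨e, he, rfl⟩ := he'
        obtain ⟨f, hf, rfl⟩ := hf'
        have hef : e ≠ f := fun h => hne (congrArg ρ h)
        have hGc := hcliqueGH _ _ hc
        rw [hφρ e (hBnox e he), hφρ f (hBnox f hf)] at hGc
        exact hAp (Finset.mem_coe.mpr (Finset.mem_of_mem_erase he))
          (Finset.mem_coe.mpr (Finset.mem_of_mem_erase hf)) hef hGc
    have hB'le : B'.card ≤ alphaPrime (G.induce {v | v ≠ x}) := by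
      rw [← hH]
      exact le_csSup (alphaSet_bdd H) ⟨B', hB'indep, rfl⟩
    have hcardA : A.card ≤ 1 + B.card := by
      by_cases hmem : s(x, y) ∈ A
      · rw [hB, Finset.card_erase_of_mem hmem]
        omega
      · rw [hB, Finset.erase_eq_of_notMem hmem]
        omega
    calc A.card ≤ 1 + B.card := hcardA
      _ = 1 + B'.card := by rw [hcardB']
      _ ≤ 1 + alphaPrime (G.induce {v | v ≠ x}) := by omega
  · -- 1 + α'(H) ≤ α'(G)
    have hmemH : alphaPrime (G.induce {v | v ≠ x}) ∈
        {k | ∃ A : Finset (Sym2 W), EdgeIndep H ↑A ∧ A.card = k} := by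
      rw [← hH]
      exact Nat.sSup_mem (alphaSet_nonempty H) (alphaSet_bdd H)
    obtain ⟨A', ⟨hA'e, hA'p⟩, hcard⟩ := hmemH
    set A : Finset (Sym2 V) := insert s(x, y) (A'.image φ) with hA
    have hxynotmem : s(x, y) ∉ A'.image φ := by
      intro h
      rw [Finset.mem_image] at h
      obtain ⟨e', _, he'⟩ := h
      exact hφnox e' (he' ▸ Sym2.mem_mk_left x y)
    have hcardA : A.card = 1 + A'.card := by
      rw [hA, Finset.card_insert_of_notMem hxynotmem,
        Finset.card_image_of_injective _ hφinj]
      omega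
    have hAindep : EdgeIndep G ↑A := by
      constructor
      · intro e he
        rw [Finset.mem_coe, hA, Finset.mem_insert] at he
        rcases he with rfl | he
        · exact hadj
        · rw [Finset.mem_image] at he
          obtain ⟨e', he', rfl⟩ := he
          exact hφedge e' (hA'e (Finset.mem_coe.mpr he'))
      · intro e he f hf hne
        rw [Finset.mem_coe, hA, Finset.mem_insert] at he hf
        rcases he with rfl | he <;> rcases hf with rfl | hf
        · exact absurd rfl hne
        · rw [Finset.mem_image] at hf
          obtain ⟨f', hf', rfl⟩ := hf
          exact hxyclique f' (hA'e (Finset.mem_coe.mpr hf'))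
        · rw [Finset.mem_image] at he
          obtain ⟨e', he', rfl⟩ := he
          rw [hsymm]
          exact hxyclique e' (hA'e (Finset.mem_coe.mpr he'))
        · rw [Finset.mem_image] at he hf
          obtain ⟨e', he', rfl⟩ := he
          obtain ⟨f', hf', rfl⟩ := hf
          have hne' : e' ≠ f' := fun h => hne (congrArg φ h)
          intro hc
          exact hA'p (Finset.mem_coe.mpr he') (Finset.mem_coe.mpr hf') hne'
            (hcliqueHG _ _ hc)
    calc 1 + alphaPrime (G.induce {v | v ≠ x}) = A.card := by rw [hcardA, hcard]
      _ ≤ alphaPrime G := le_csSup (alphaSet_bdd G) ⟨A, hAindep, rfl⟩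
end

section
/- For every graph G, the edge-clique covering number of G equals the vertex-clique cover number of the edge-clique graph of G: θ_e(G) = κ(K_e(G)). -/
/-!
The edges of `G` inside a clique of `G` form a clique of `K_e(G)`, and the endpoints of the edges
of a clique of `K_e(G)` form a clique of `G`. Hence every edge-clique cover of `G` yields a
vertex-clique cover of `K_e(G)` of no larger size and vice versa, so the two sets of attainable
sizes have the same infimum (also when both are empty).
-/

open SimpleGraph

/-- The edge-clique graph `K_e(G)`. -/
def Ke {V : Type*} (G : SimpleGraph V) : SimpleGraph G.edgeSet where
  Adj e f := e ≠ f ∧ G.IsClique {x | x ∈ e.1 ∨ x ∈ f.1}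
  symm := ⟨by
    rintro e f ⟨hne, hc⟩
    refine ⟨hne.symm, ?_⟩
    have h : {x | x ∈ f.1 ∨ x ∈ e.1} = {x | x ∈ e.1 ∨ x ∈ f.1} := by
      ext x; exact or_comm
    rw [h]; exact hc⟩
  loopless := ⟨fun e h => h.1 rfl⟩

/-- The vertex-clique cover number `κ(H)`. -/
noncomputable def cliqueCoverNum {W : Type*} (H : SimpleGraph W) : ℕ :=
  sInf {n | ∃ F : Finset (Set W), (∀ C ∈ F, H.IsClique C) ∧
    (∀ w : W, ∃ C ∈ F, w ∈ C) ∧ F.card = n}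

theorem SimpleGraph.adj_of_mem_of_mem_edgeSet {V : Type*} {G : SimpleGraph V} {e : Sym2 V}
    (he : e ∈ G.edgeSet) {u v : V} (hu : u ∈ e) (hv : v ∈ e) (huv : u ≠ v) : G.Adj u v := by
  rwa [(Sym2.mem_and_mem_iff huv).1 ⟨hu, hv⟩, mem_edgeSet] at he

namespace Ke

variable {V : Type*} {G : SimpleGraph V}

def edgesIn (G : SimpleGraph V) (C : Set V) : Set G.edgeSet :=
  {e | ∀ x ∈ (e : Sym2 V), x ∈ C}

def support (S : Set G.edgeSet) : Set V :=
  {x | ∃ e ∈ S, x ∈ (e : Sym2 V)}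

theorem isClique_edgesIn {C : Set V} (hC : G.IsClique C) : (Ke G).IsClique (edgesIn G C) :=
  fun _ he _ hf hne => ⟨hne, hC.subset fun _ hx => hx.elim (he _) (hf _)⟩

theorem isClique_support {S : Set G.edgeSet} (hS : (Ke G).IsClique S) :
    G.IsClique (support S) := by
  rintro u ⟨e, he, hue⟩ v ⟨f, hf, hvf⟩ huv
  obtain rfl | hef := eq_or_ne e f
  · exact G.adj_of_mem_of_mem_edgeSet e.2 hue hvf huv
  · exact (hS he hf hef).2 (Or.inl hue) (Or.inr hvf) huv

theorem exists_cliqueCover_card_le {F : Finset (Finset V)} (hF : IsEdgeCliqueCover G F) :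
    ∃ F' : Finset (Set G.edgeSet), (∀ C ∈ F', (Ke G).IsClique C) ∧
      (∀ w : G.edgeSet, ∃ C ∈ F', w ∈ C) ∧ F'.card ≤ F.card := by
  classical
  refine ⟨F.image fun C : Finset V => edgesIn G C, ?_, fun w => ?_, Finset.card_image_le⟩
  · simp only [Finset.mem_image]
    rintro _ ⟨C, hC, rfl⟩
    exact isClique_edgesIn (hF.1 C hC)
  · obtain ⟨C, hC, hwC⟩ := hF.2 w.1 w.2
    exact ⟨_, Finset.mem_image_of_mem _ hC, hwC⟩

theorem exists_isEdgeCliqueCover_card_le [Finite V] {F : Finset (Set G.edgeSet)}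
    (hcl : ∀ C ∈ F, (Ke G).IsClique C) (hcov : ∀ w : G.edgeSet, ∃ C ∈ F, w ∈ C) :
    ∃ F' : Finset (Finset V), IsEdgeCliqueCover G F' ∧ F'.card ≤ F.card := by
  classical
  refine ⟨F.image fun S => (support S).toFinite.toFinset, ⟨?_, fun e he => ?_⟩,
    Finset.card_image_le⟩
  · simp only [Finset.mem_image]
    rintro _ ⟨S, hS, rfl⟩
    simpa using isClique_support (hcl S hS)
  · obtain ⟨S, hS, heS⟩ := hcov ⟨e, he⟩
    exact ⟨_, Finset.mem_image_of_mem _ hS, fun x hx => by simpa using ⟨_, heS, hx⟩⟩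

end Ke

/-- `θ_e(G) = κ(K_e(G))`. -/
theorem thetaE_eq_cliqueCoverNum_Ke {V : Type*} [Fintype V] (G : SimpleGraph V) :
    thetaE G = cliqueCoverNum (Ke G) := by
  refine csInf_eq_csInf_of_forall_exists_le ?_ ?_
  · rintro _ ⟨F, hF, rfl⟩
    obtain ⟨F', hcl, hcov, hle⟩ := Ke.exists_cliqueCover_card_le hF
    exact ⟨_, ⟨F', hcl, hcov, rfl⟩, hle⟩
  · rintro _ ⟨F, hcl, hcov, rfl⟩
    obtain ⟨F', hF', hle⟩ := Ke.exists_isEdgeCliqueCover_card_le hcl hcov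
    exact ⟨_, ⟨F', hF', rfl⟩, hle⟩
end
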